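/- arXiv:math/0504003 — 9 statements merged into one kernel-verified Lean document; each statement's English description precedes it below -/
import Mathlib

section
/- In the Prüfer group ℤ(p^∞), viewed as the p-primary subgroup of ℚ/ℤ, the sequence a_n = -1/p + 1/p^n is not a T-sequence: there is no Hausdorff group topology τ on ℤ(p^∞) such that a_n → 0 in τ. -/
/-
If `a_n → 0`, then `e_{n+1} = a_n + e_1 → e_1`. Multiplication by `p` is continuous and sends
`e_{n+1}` to `e_n`, so the limit `e_1` is fixed by it; but `p • e_1 = e_0 = 0`, whereas `e_1 ≠ 0`.
-/

open Filter Topology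

noncomputable section

/-- The Prüfer `p`-group, as the subgroup of `ℚ/ℤ` of elements of `p`-power order. -/
def Prufer (p : ℕ) : AddSubgroup (AddCircle (1 : ℚ)) where
  carrier := {x | ∃ n : ℕ, p ^ n • x = 0}
  zero_mem' := ⟨0, smul_zero _⟩
  add_mem' := by
    rintro a b ⟨m, hm⟩ ⟨n, hn⟩
    refine ⟨m + n, ?_⟩
    have ha : p ^ (m + n) • a = 0 := by
      rw [pow_add, mul_comm, mul_smul, hm, smul_zero]
    have hb : p ^ (m + n) • b = 0 := by
      rw [pow_add, mul_smul, hn, smul_zero]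
    rw [smul_add, ha, hb, add_zero]
  neg_mem' := by
    rintro a ⟨n, hn⟩
    exact ⟨n, by rw [smul_neg, hn, neg_zero]⟩

/-- The element `e_n = 1/p^n` of the Prüfer `p`-group. -/
def eP (p n : ℕ) : Prufer p :=
  ⟨((((p : ℚ) ^ n)⁻¹ : ℚ) : AddCircle (1 : ℚ)), n, by
    rcases eq_or_ne ((p : ℚ) ^ n) 0 with h | h
    · simp [h]
    · have key : ((p ^ n : ℕ) • ((((p : ℚ) ^ n)⁻¹ : ℚ)) : ℚ) = (1 : ℚ) := by
        rw [nsmul_eq_mul]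
        push_cast
        field_simp
      calc p ^ n • ((((p : ℚ) ^ n)⁻¹ : ℚ) : AddCircle (1 : ℚ))
          = (((p ^ n : ℕ) • (((p : ℚ) ^ n)⁻¹ : ℚ) : ℚ) : AddCircle (1 : ℚ)) := by
            norm_cast
        _ = ((1 : ℚ) : AddCircle (1 : ℚ)) := by rw [key]
        _ = 0 := AddCircle.coe_period 1⟩

/-- `{a_k}` is a T-sequence: it converges to `0` in some Hausdorff group topology. -/
def IsTSeq {A : Type*} [AddCommGroup A] (a : ℕ → A) : Prop :=
  ∃ τ : TopologicalSpace A, @IsTopologicalAddGroup A τ _ ∧ @T2Space A τ ∧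
    Filter.Tendsto a Filter.atTop (@nhds A τ 0)

/-- The set `A(l,m)` of sums `m₁ a_{k₁} + ⋯ + m_h a_{k_h}` with distinct indices `kᵢ ≥ m`,
nonzero integer coefficients, and `Σ|mᵢ| ≤ l`. -/
def TSet {A : Type*} [AddCommGroup A] (a : ℕ → A) (l m : ℕ) : Set A :=
  {x | ∃ (s : Finset ℕ) (c : ℕ → ℤ), (∀ k ∈ s, m ≤ k) ∧ (∀ k ∈ s, c k ≠ 0) ∧
    (∑ k ∈ s, (c k).natAbs) ≤ l ∧ x = ∑ k ∈ s, c k • a k}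

/-- `σ` is a finitely supported representation `y = Σ_{n ≥ 1} σ_n e_n`. -/
def IsRep (p : ℕ) (y : Prufer p) (σ : ℕ →₀ ℤ) : Prop :=
  σ 0 = 0 ∧ y = ∑ n ∈ σ.support, σ n • eP p n

/-- `σ` is the canonical form of `y`: a representation with `|σ_n| ≤ (p-1)/2`. -/
def IsCanonical (p : ℕ) (y : Prufer p) (σ : ℕ →₀ ℤ) : Prop :=
  IsRep p y σ ∧ ∀ n, 2 * (σ n).natAbs ≤ p - 1

theorem nsmul_eq_self_of_tendsto_of_nsmul_succ {G : Type*} [AddMonoid G] [TopologicalSpace G]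
    [ContinuousAdd G] [T2Space G] {x : ℕ → G} {c : G} {m : ℕ}
    (hx : Tendsto x atTop (𝓝 c)) (hm : ∀ n, m • x (n + 1) = x n) : m • c = c :=
  tendsto_nhds_unique
    (((hx.comp (tendsto_add_atTop_nat 1)).nsmul m).congr fun n => hm n) hx

theorem eP_zero (p : ℕ) : eP p 0 = 0 :=
  Subtype.ext <| by simp [eP]

theorem nsmul_eP_succ {p : ℕ} (hp : p ≠ 0) (n : ℕ) : p • eP p (n + 1) = eP p n := by
  apply Subtype.ext
  have hp' : (p : ℚ) ≠ 0 := by exact_mod_cast hp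
  have h : (p • ((p : ℚ) ^ (n + 1))⁻¹ : ℚ) = ((p : ℚ) ^ n)⁻¹ := by
    rw [nsmul_eq_mul]
    field_simp
    ring
  simp only [eP, AddSubgroup.coe_nsmul, ← h]
  norm_cast

theorem eP_one_ne_zero {p : ℕ} (hp : 1 < p) : eP p 1 ≠ 0 := by
  have hp' : (1 : ℚ) < p := by exact_mod_cast hp
  intro h
  have h0 : ((((p : ℚ) ^ 1)⁻¹ : ℚ) : AddCircle (1 : ℚ)) = 0 := congrArg Subtype.val h
  obtain ⟨n, hn⟩ := (AddCircle.coe_eq_zero_of_pos_iff 1 one_pos (by positivity)).1 h0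
  rw [nsmul_one, pow_one] at hn
  have hlt : (n : ℚ) < 1 := hn ▸ inv_lt_one_of_one_lt₀ hp'
  have hpos : (0 : ℚ) < n := hn ▸ by positivity
  norm_cast at hlt hpos
  omega

/-- The sequence `a_n = -1/p + 1/p^n` is not a T-sequence in `ℤ(p^∞)`. -/
theorem stmt0 (p : ℕ) (hp : p.Prime) (a : ℕ → Prufer p)
    (ha : ∀ n : ℕ, a n = -eP p 1 + eP p (n + 1)) :
    ¬ IsTSeq a := by
  rintro ⟨τ, _, _, hconv⟩
  have hshift : Tendsto (fun n => eP p (n + 1)) atTop (𝓝 (eP p 1)) := by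
    simpa [ha] using hconv.add_const (eP p 1)
  have hfix := nsmul_eq_self_of_tendsto_of_nsmul_succ
    ((tendsto_add_atTop_iff_nat 1).1 hshift) (nsmul_eP_succ hp.ne_zero)
  rw [nsmul_eP_succ hp.ne_zero, eP_zero] at hfix
  exact eP_one_ne_zero hp.one_lt hfix.symm
end
end

section
/- Let A be an abelian group and {a_k} a sequence in A with each a_k of finite order t_k. If the quantities t_k / gcd(t_k, lcm(t_1, …, t_{k-1})) tend to infinity as k → ∞, then {a_k} is a T-sequence in A. -/
open Filter Topology

noncomputable section

/-!
The topology is the group topology whose basic neighbourhoods of `0` are, for monotone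
`m : ℕ → ℕ`, the sets of sums `∑ εᵢ a_{nᵢ}` with `εᵢ ∈ {-1, 0, 1}` and `nᵢ ≥ mᵢ`; by construction
`a_k → 0`. It is Hausdorff because a nonzero `g` of order `r` is not such a sum once `m` is chosen
so that `t_k / gcd(t_k, lcm(t_0, …, t_{k-1})) > r (i + 1)` for all `k ≥ mᵢ`.
-/

open Finset Pointwise

def lcmGap (t : ℕ → ℕ) (k : ℕ) : ℕ := t k / (t k).gcd ((range k).lcm t)

lemma lcmGap_le_of_dvd {t : ℕ → ℕ} {k c : ℕ} (hc : 0 < c) (h : t k ∣ (range k).lcm t * c) :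
    lcmGap t k ≤ c := by
  rcases Nat.eq_zero_or_pos (t k) with htk | htk
  · simp [lcmGap, htk]
  refine Nat.le_of_dvd hc <| (Nat.div_dvd_iff_dvd_mul (Nat.gcd_dvd_left _ _)
    (Nat.gcd_pos_of_pos_left _ htk)).2 <| Nat.dvd_gcd_mul_iff_dvd_mul.2 h

section TailSums

variable {A : Type*} [AddCommGroup A] (a : ℕ → A)

def tailSums (m : ℕ → ℕ) : Set A :=
  {x | ∃ (s : Finset ℕ) (ε : ℕ → ℤ) (n : ℕ → ℕ), (∀ i, (ε i).natAbs ≤ 1 ∧ m i ≤ n i) ∧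
    ∑ i ∈ s, ε i • a (n i) = x}

variable {a}

lemma zero_mem_tailSums (m : ℕ → ℕ) : (0 : A) ∈ tailSums a m :=
  ⟨∅, 0, m, fun _ => ⟨by simp, le_rfl⟩, sum_empty⟩

lemma neg_mem_tailSums {m : ℕ → ℕ} {x : A} (hx : x ∈ tailSums a m) : -x ∈ tailSums a m := by
  obtain ⟨s, ε, n, hεn, rfl⟩ := hx
  exact ⟨s, -ε, n, fun i => by simpa using hεn i, by simp [sum_neg_distrib]⟩

lemma tailSums_anti {m m' : ℕ → ℕ} (hm : m ≤ m') : tailSums a m' ⊆ tailSums a m := by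
  rintro x ⟨s, ε, n, hεn, rfl⟩
  exact ⟨s, ε, n, fun i => ⟨(hεn i).1, (hm i).trans (hεn i).2⟩, rfl⟩

lemma mem_tailSums_of_le {m : ℕ → ℕ} {k : ℕ} (hk : m 0 ≤ k) : a k ∈ tailSums a m :=
  ⟨{0}, 1, fun i => max (m i) k, fun i => ⟨by simp, le_max_left _ _⟩, by simp [hk]⟩

/-- Interleave the two sums, the first at the even and the second at the odd positions;
monotonicity of `m` pays for the even ones. -/
lemma tailSums_add_subset {m : ℕ → ℕ} (hm : Monotone m) :
    tailSums a (fun i => m (2 * i + 1)) + tailSums a (fun i => m (2 * i + 1)) ⊆ tailSums a m := by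
  rintro _ ⟨_, ⟨s, ε, n, hεn, rfl⟩, _, ⟨s', ε', n', hεn', rfl⟩, rfl⟩
  let e := Equiv.natSumNatEquivNat
  refine ⟨(s.disjSum s').map e.toEmbedding, Sum.elim ε ε' ∘ e.symm, Sum.elim n n' ∘ e.symm,
    fun i => ?_, by simp [sum_disjSum]⟩
  obtain ⟨j | j, rfl⟩ := e.surjective i
  · simpa [e] using ⟨(hεn j).1, (hm (Nat.le_succ _)).trans (hεn j).2⟩
  · simpa [e] using hεn' j

lemma tailSums_subset_torsion (ha : ∀ k, IsOfFinAddOrder (a k)) (m : ℕ → ℕ) :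
    tailSums a m ⊆ AddCommGroup.torsion A := by
  rintro _ ⟨s, ε, n, -, rfl⟩
  exact AddSubgroup.sum_mem _ fun i _ => AddSubgroup.zsmul_mem _ (ha (n i)) _

abbrev tailSumsBasis (a : ℕ → A) : AddGroupFilterBasis A :=
  addGroupFilterBasisOfComm {U | ∃ m, Monotone m ∧ U = tailSums a m}
    ⟨_, 0, monotone_const, rfl⟩
    (by
      rintro _ _ ⟨m, hm, rfl⟩ ⟨m', hm', rfl⟩
      exact ⟨_, ⟨_, hm.sup hm', rfl⟩,
        Set.subset_inter (tailSums_anti le_sup_left) (tailSums_anti le_sup_right)⟩)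
    (by rintro _ ⟨m, -, rfl⟩; exact zero_mem_tailSums m)
    (by
      rintro _ ⟨m, hm, rfl⟩
      exact ⟨_, ⟨_, hm.comp fun i j hij => by omega, rfl⟩, tailSums_add_subset hm⟩)
    (by rintro _ ⟨m, hm, rfl⟩; exact ⟨_, ⟨m, hm, rfl⟩, fun x => neg_mem_tailSums⟩)

theorem isTSeq_of_forall_exists_notMem_tailSums
    (h : ∀ g ≠ (0 : A), ∃ m, Monotone m ∧ g ∉ tailSums a m) : IsTSeq a := by
  let B := tailSumsBasis a
  let := B.topology
  have := B.isTopologicalAddGroup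
  refine ⟨B.topology, this, IsTopologicalAddGroup.t2Space_of_zero_sep fun g hg => ?_, ?_⟩
  · obtain ⟨m, hm, hg⟩ := h g hg
    exact ⟨_, B.mem_nhds_zero ⟨m, hm, rfl⟩, hg⟩
  · rw [B.nhds_zero_hasBasis.tendsto_right_iff]
    rintro _ ⟨m, -, rfl⟩
    filter_upwards [eventually_ge_atTop (m 0)] with k hk using mem_tailSums_of_le hk

lemma sum_filter_eq_smul (s : Finset ℕ) (ε : ℕ → ℤ) (n : ℕ → ℕ) (j : ℕ) :
    ∑ i ∈ s with n i = j, ε i • a (n i) = (∑ i ∈ s with n i = j, ε i) • a j := by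
  rw [sum_smul]
  exact sum_congr rfl fun i hi => by rw [(mem_filter.1 hi).2]

lemma lcm_nsmul_sum_eq {s : Finset ℕ} (ε : ℕ → ℤ) {n : ℕ → ℕ} {j : ℕ} (hj : ∀ i ∈ s, n i ≤ j) :
    ((range j).lcm fun k => addOrderOf (a k)) • ∑ i ∈ s, ε i • a (n i) =
      ((range j).lcm fun k => addOrderOf (a k)) • (∑ i ∈ s with n i = j, ε i) • a j := by
  set L := (range j).lcm fun k => addOrderOf (a k)
  have hlow : L • ∑ i ∈ s with n i ≠ j, ε i • a (n i) = 0 := by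
    rw [smul_sum]
    refine sum_eq_zero fun i hi => ?_
    obtain ⟨hi, hij⟩ := mem_filter.1 hi
    have : addOrderOf (a (n i)) ∣ L := dvd_lcm (mem_range.2 ((hj i hi).lt_of_ne hij))
    rw [smul_comm, addOrderOf_dvd_iff_nsmul_eq_zero.1 this, smul_zero]
  rw [← sum_filter_add_sum_filter_not s (fun i => n i = j), smul_add, hlow, add_zero,
    sum_filter_eq_smul]

/-- Let `j` be the largest index occurring and `c` the total coefficient of `a_j`. Multiplying by
`r` and the lcm `L` of the earlier orders leaves `r L c • a_j = 0`, so `lcmGap j ≤ r |c| ≤ r (i + 1)`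
for the largest `i` with `nᵢ = j`. The gap bound thus forces `c = 0`, and the terms with `nᵢ = j`
can be dropped. -/
theorem sum_eq_zero_of_nsmul_eq_zero {r : ℕ} (hr : 0 < r) (s : Finset ℕ) {ε : ℕ → ℤ}
    {n : ℕ → ℕ} (hε : ∀ i ∈ s, (ε i).natAbs ≤ 1)
    (hgap : ∀ i ∈ s, r * (i + 1) < lcmGap (fun k => addOrderOf (a k)) (n i))
    (h : r • ∑ i ∈ s, ε i • a (n i) = 0) : ∑ i ∈ s, ε i • a (n i) = 0 := by
  induction s using Finset.strongInduction with | H s ih =>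
  rcases s.eq_empty_or_nonempty with rfl | hs
  · exact sum_empty
  set j := (s.image n).max' (hs.image n)
  have hj : ∀ i ∈ s, n i ≤ j := fun i hi => le_max' _ _ (mem_image_of_mem n hi)
  obtain ⟨i₀, hi₀s, hi₀j⟩ := mem_image.1 (max'_mem (s.image n) (hs.image n))
  obtain ⟨I, hI_def⟩ : ∃ I, s.filter (fun i => n i = j) = I := ⟨_, rfl⟩
  have hI : I.Nonempty := hI_def ▸ ⟨i₀, mem_filter.2 ⟨hi₀s, hi₀j⟩⟩
  obtain ⟨c, hc_def⟩ : ∃ c, ∑ i ∈ I, ε i = c := ⟨_, rfl⟩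
  suffices hc : c = 0 by
    rw [← sum_filter_add_sum_filter_not s (fun i => n i = j), sum_filter_eq_smul, hI_def, hc_def,
      hc, zero_smul, zero_add] at h ⊢
    exact ih _ (filter_ssubset.2 ⟨i₀, hi₀s, not_not.2 hi₀j⟩)
      (fun i hi => hε i (mem_filter.1 hi).1) (fun i hi => hgap i (mem_filter.1 hi).1) h
  by_contra hc
  have hkill : (((r * (range j).lcm fun k => addOrderOf (a k)) : ℕ) * c) • a j = 0 := by
    rw [mul_zsmul, natCast_zsmul, mul_smul, ← hc_def, ← hI_def, ← lcm_nsmul_sum_eq ε hj,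
      smul_comm, h, smul_zero]
  have hdvd : addOrderOf (a j) ∣ (range j).lcm (fun k => addOrderOf (a k)) * (r * c.natAbs) := by
    have := Int.natAbs_dvd_natAbs.2 (addOrderOf_dvd_iff_zsmul_eq_zero.2 hkill)
    rwa [Int.natAbs_mul, Int.natAbs_natCast, Int.natAbs_natCast, mul_comm r, mul_assoc] at this
  have hIs : ∀ i ∈ I, i ∈ s ∧ n i = j := fun i hi => mem_filter.1 (hI_def ▸ hi)
  have hcI : c.natAbs ≤ I.max' hI + 1 :=
    calc c.natAbs ≤ ∑ i ∈ I, (ε i).natAbs := hc_def ▸ Int.natAbs_sum_le _ _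
      _ ≤ I.card := by simpa using sum_le_card_nsmul I _ 1 fun i hi => hε i (hIs i hi).1
      _ ≤ (range (I.max' hI + 1)).card :=
        card_le_card fun i hi => mem_range.2 (Nat.lt_succ_of_le (le_max' I i hi))
      _ = I.max' hI + 1 := card_range _
  obtain ⟨hmaxs, hmaxj⟩ := hIs _ (max'_mem I hI)
  have hlt := hgap _ hmaxs
  rw [hmaxj] at hlt
  have hle := lcmGap_le_of_dvd (by positivity) hdvd
  exact (hle.trans (Nat.mul_le_mul_left r hcI)).not_gt hlt

lemma notMem_tailSums (ha : ∀ k, IsOfFinAddOrder (a k)) {g : A} (hg : g ≠ 0) {m : ℕ → ℕ}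
    (hm : ∀ i k, m i ≤ k → addOrderOf g * (i + 1) < lcmGap (fun k => addOrderOf (a k)) k) :
    g ∉ tailSums a m := by
  intro hgm
  have hr : 0 < addOrderOf g := IsOfFinAddOrder.addOrderOf_pos (tailSums_subset_torsion ha m hgm)
  obtain ⟨s, ε, n, hεn, rfl⟩ := hgm
  exact hg <| sum_eq_zero_of_nsmul_eq_zero hr s (fun i _ => (hεn i).1)
    (fun i _ => hm i _ (hεn i).2) (addOrderOf_nsmul_eq_zero _)

lemma exists_monotone_notMem_tailSums (ha : ∀ k, IsOfFinAddOrder (a k))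
    (h : Tendsto (lcmGap fun k => addOrderOf (a k)) atTop atTop) {g : A} (hg : g ≠ 0) :
    ∃ m, Monotone m ∧ g ∉ tailSums a m := by
  obtain ⟨m, hm, hgap⟩ := extraction_forall_of_eventually fun i =>
    eventually_forall_ge_atTop.2 (h.eventually_gt_atTop (addOrderOf g * (i + 1)))
  exact ⟨m, hm.monotone, notMem_tailSums ha hg hgap⟩

end TailSums

/-- If `t_k / gcd(t_k, lcm(t_1, …, t_{k-1})) → ∞` then `{a_k}` is a T-sequence. -/
theorem stmt2 {A : Type*} [AddCommGroup A] (a : ℕ → A) (t : ℕ → ℕ)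
    (ht : ∀ k, t k = addOrderOf (a k)) (hfin : ∀ k, 0 < t k)
    (h : Filter.Tendsto (fun k => t k / Nat.gcd (t k) ((Finset.range k).lcm t))
      Filter.atTop Filter.atTop) :
    IsTSeq a := by
  obtain rfl : t = fun k => addOrderOf (a k) := funext ht
  exact isTSeq_of_forall_exists_notMem_tailSums fun g hg =>
    exists_monotone_notMem_tailSums (fun k => addOrderOf_pos_iff.1 (hfin k)) h hg

end
end

section
/- Let A be an abelian group and {a_k} a sequence in A such that each a_k has finite order t_k and the t_k are pairwise coprime with t_k → ∞. Then {a_k} is a T-sequence in A. -/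
open Filter Topology

noncomputable section

/-!
Elements of pairwise coprime orders are independent, so the subgroups generated by the tails
`{a_k : k ≥ N}` have trivial intersection. Every `a_k` eventually lies in each of them, so the
group topology having these subgroups as a basis of neighbourhoods of `0` is Hausdorff and makes
`a_k → 0`; it is realised as the topology induced by `A → ∏ N, A ⧸ ⟨a_k : k ≥ N⟩`, each factor
discrete.
-/

open Function

section Topology

variable {A : Type*} [AddCommGroup A] {a : ℕ → A}

theorem isTSeq_of_injective {B : Type*} [AddCommGroup B] [TopologicalSpace B]
    [IsTopologicalAddGroup B] [T2Space B] (F : A →+ B) (hF : Injective F)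
    (h : Tendsto (F ∘ a) atTop (𝓝 0)) : IsTSeq a := by
  let _ : TopologicalSpace A := .induced F ‹_›
  refine ⟨‹_›, topologicalAddGroup_induced F, IsEmbedding.t2Space ⟨⟨rfl⟩, hF⟩, ?_⟩
  rwa [nhds_induced, tendsto_comap_iff, map_zero]

theorem isTSeq_of_iInf_eq_bot {ι : Type*} (C : ι → AddSubgroup A) (hC : ⨅ i, C i = ⊥)
    (ha : ∀ i, ∀ᶠ k in atTop, a k ∈ C i) : IsTSeq a := by
  let _ : ∀ i, TopologicalSpace (A ⧸ C i) := fun _ => ⊥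
  have _ : ∀ i, DiscreteTopology (A ⧸ C i) := fun _ => ⟨rfl⟩
  refine isTSeq_of_injective (AddMonoidHom.pi fun i => QuotientAddGroup.mk' (C i)) ?_ ?_
  · refine (injective_iff_map_eq_zero _).2 fun x hx => ?_
    have hmem : x ∈ ⨅ i, C i := AddSubgroup.mem_iInf.2 fun i =>
      (QuotientAddGroup.eq_zero_iff x).1 (congrFun hx i)
    rwa [hC, AddSubgroup.mem_bot] at hmem
  · refine tendsto_pi_nhds.2 fun i => ?_
    rw [nhds_discrete, tendsto_pure]
    exact (ha i).mono fun k hk => (QuotientAddGroup.eq_zero_iff _).2 hk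

end Topology

section Independence

variable {A ι : Type*} [AddCommGroup A] {a : ι → A}

theorem eq_zero_of_nsmul_eq_zero_of_coprime {x : A} {m n : ℕ} (hmn : m.Coprime n)
    (hm : m • x = 0) (hn : n • x = 0) : x = 0 :=
  AddMonoid.addOrderOf_eq_one_iff.1 <| Nat.eq_one_of_dvd_coprimes hmn
    (addOrderOf_dvd_of_nsmul_eq_zero hm) (addOrderOf_dvd_of_nsmul_eq_zero hn)

theorem smul_eq_zero_of_sum_smul_eq_zero
    (hcop : Pairwise (Nat.Coprime on fun i => addOrderOf (a i)))
    {s : Finset ι} {c : ι → ℤ} (h : ∑ j ∈ s, c j • a j = 0) {i : ι} (hi : i ∈ s) :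
    c i • a i = 0 := by
  classical
  set m := ∏ j ∈ s.erase i, addOrderOf (a j)
  have hkill : ∀ j ∈ s.erase i, m • (c j • a j) = 0 := fun j hj => by
    obtain ⟨e, he⟩ : addOrderOf (a j) ∣ m := Finset.dvd_prod_of_mem _ hj
    rw [smul_comm, he, mul_comm, mul_smul, addOrderOf_nsmul_eq_zero, smul_zero, smul_zero]
  have hm : m • (c i • a i) = 0 :=
    calc m • (c i • a i) = m • ∑ j ∈ s, c j • a j := by
          rw [← Finset.add_sum_erase s _ hi, smul_add, Finset.smul_sum,
            Finset.sum_eq_zero hkill, add_zero]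
      _ = 0 := by rw [h, smul_zero]
  have hord : addOrderOf (a i) • (c i • a i) = 0 := by
    rw [smul_comm, addOrderOf_nsmul_eq_zero, smul_zero]
  exact eq_zero_of_nsmul_eq_zero_of_coprime
    (Nat.Coprime.prod_left fun j hj => hcop (Finset.ne_of_mem_erase hj)) hm hord

theorem linearCombination_eq_zero_iff_forall_smul_eq_zero
    (hcop : Pairwise (Nat.Coprime on fun i => addOrderOf (a i))) (l : ι →₀ ℤ) :
    Finsupp.linearCombination ℤ a l = 0 ↔ ∀ i, l i • a i = 0 := by
  refine ⟨fun h i => ?_, fun h => ?_⟩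
  · by_cases hi : i ∈ l.support
    · exact smul_eq_zero_of_sum_smul_eq_zero hcop h hi
    · rw [Finsupp.notMem_support_iff.1 hi, zero_smul]
  · exact Finset.sum_eq_zero fun i _ => h i

theorem mem_closure_image_iff {S : Set ι} {x : A} :
    x ∈ AddSubgroup.closure (a '' S) ↔
      ∃ l ∈ Finsupp.supported ℤ ℤ S, Finsupp.linearCombination ℤ a l = x := by
  rw [← Submodule.span_int_eq_addSubgroupClosure, Submodule.mem_toAddSubgroup,
    Finsupp.mem_span_image_iff_linearCombination]

theorem disjoint_closure_image_of_coprime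
    (hcop : Pairwise (Nat.Coprime on fun i => addOrderOf (a i))) {S T : Set ι}
    (hST : Disjoint S T) :
    Disjoint (AddSubgroup.closure (a '' S)) (AddSubgroup.closure (a '' T)) := by
  refine AddSubgroup.disjoint_def.2 fun {x} hxS hxT => ?_
  obtain ⟨l, hlS, rfl⟩ := mem_closure_image_iff.1 hxS
  obtain ⟨l', hlT, hl'⟩ := mem_closure_image_iff.1 hxT
  have hdiff : ∀ i, (l - l') i • a i = 0 :=
    (linearCombination_eq_zero_iff_forall_smul_eq_zero hcop _).1 (by rw [map_sub, hl', sub_self])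
  refine (linearCombination_eq_zero_iff_forall_smul_eq_zero hcop l).2 fun i => ?_
  by_cases hi : i ∈ S
  · have hl'i : l' i = 0 := Finsupp.notMem_support_iff.1 fun h =>
      hST.notMem_of_mem_left hi ((Finsupp.mem_supported ℤ l').1 hlT h)
    simpa [hl'i] using hdiff i
  · rw [Finsupp.notMem_support_iff.1 fun h => hi ((Finsupp.mem_supported ℤ l).1 hlS h),
      zero_smul]

end Independence

theorem iInf_closure_tail_eq_bot_of_coprime {A : Type*} [AddCommGroup A] {a : ℕ → A}
    (hcop : Pairwise (Nat.Coprime on fun k => addOrderOf (a k))) :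
    ⨅ N, AddSubgroup.closure (a '' Set.Ici N) = ⊥ := by
  refine (AddSubgroup.eq_bot_iff_forall _).2 fun x hx => ?_
  have hx' : ∀ N, x ∈ AddSubgroup.closure (a '' Set.Ici N) := AddSubgroup.mem_iInf.1 hx
  obtain ⟨l, -, rfl⟩ := mem_closure_image_iff.1 (hx' 0)
  obtain ⟨M, hM⟩ := Finset.exists_nat_subset_range l.support
  have hlow : Finsupp.linearCombination ℤ a l ∈ AddSubgroup.closure (a '' Set.Iio M) :=
    mem_closure_image_iff.2 ⟨l, (Finsupp.mem_supported ℤ l).2 fun k hk => by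
      simpa using Finset.mem_range.1 (hM hk), rfl⟩
  exact AddSubgroup.disjoint_def.1
    (disjoint_closure_image_of_coprime hcop (Set.Iio_disjoint_Ici le_rfl)) hlow (hx' M)

theorem stmt3_general {A : Type*} [AddCommGroup A] (a : ℕ → A) (t : ℕ → ℕ)
    (ht : ∀ k, t k = addOrderOf (a k))
    (hcop : ∀ i j, i ≠ j → Nat.Coprime (t i) (t j)) :
    IsTSeq a := by
  have hcop' : Pairwise (Nat.Coprime on fun k => addOrderOf (a k)) := fun i j hij => by
    simpa only [onFun, ht] using hcop i j hij
  exact isTSeq_of_iInf_eq_bot (fun N => AddSubgroup.closure (a '' Set.Ici N))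
    (iInf_closure_tail_eq_bot_of_coprime hcop')
    fun N => (eventually_ge_atTop N).mono fun k hk => AddSubgroup.subset_closure ⟨k, hk, rfl⟩

/-- If the orders `t_k` are pairwise coprime and `t_k → ∞`, then `{a_k}` is a T-sequence. -/
theorem stmt3 {A : Type*} [AddCommGroup A] (a : ℕ → A) (t : ℕ → ℕ)
    (ht : ∀ k, t k = addOrderOf (a k)) (hfin : ∀ k, 0 < t k)
    (hcop : ∀ i j, i ≠ j → Nat.Coprime (t i) (t j))
    (htend : Filter.Tendsto t Filter.atTop Filter.atTop) :
    IsTSeq a :=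
  stmt3_general a t ht hcop
end
end

section
/- Let A be an abelian group and {a_k} a sequence in A with each a_k of finite order t_k, such that t_k divides t_{k+1} for all k and t_{k+1}/t_k → ∞. Then {a_k} is a T-sequence in A. -/
open Filter Topology

noncomputable section

/-!
Fix `g ≠ 0` and let `m > 0` kill every element of finite order in `⟨g⟩`. Since `t k` kills
`a 0, …, a k`, if `c • a (k+1)` lies in `⟨g, a 0, …, a k⟩` then `t k • c • a (k+1)` is a torsion
element of `⟨g⟩`, so `t (k+1) ∣ c · t k · m`. Hence an `ℝ/ℤ`-valued character on that subgroup
extends to `a (k+1)` with a value of norm at most `m · t k / (2 t (k+1))`. Starting from a character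
with `χ g ≠ 0` and using compactness of `(ℝ/ℤ)^A` to pass from finitely many steps to all of them,
we get a character with `χ g ≠ 0` and `χ (a k) → 0`. The initial topology of all characters with
`χ (a k) → 0` is then a Hausdorff group topology in which `a k → 0`.
-/

local notation "𝕋" => AddCircle (1 : ℝ)

namespace AddMonoidHom

variable {G A M : Type*} [AddCommGroup G] [AddCommGroup A] [AddCommGroup M] [DivisibleBy M ℤ]

theorem exists_comp_eq_of_ker_le (φ : G →+ A) (ψ : G →+ M) (h : φ.ker ≤ ψ.ker) :
    ∃ χ : A →+ M, χ.comp φ = ψ := by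
  let f : φ.range →+ M :=
    φ.rangeRestrict.liftOfSurjective φ.rangeRestrict_surjective ⟨ψ, by rwa [ker_rangeRestrict]⟩
  obtain ⟨χ, hχ⟩ := (Module.Baer.of_divisible M).extension_property_addMonoidHom
    φ.range.subtype Subtype.val_injective f
  refine ⟨χ, ext fun y => ?_⟩
  simpa [f] using congr($hχ (φ.rangeRestrict y))

theorem exists_eq_on_and_apply_eq (B : AddSubgroup A) (χ : A →+ M) (x : A) (θ : M)
    (h : ∀ c : ℤ, c • x ∈ B → χ (c • x) = c • θ) :
    ∃ χ' : A →+ M, (∀ y ∈ B, χ' y = χ y) ∧ χ' x = θ := by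
  obtain ⟨χ', hχ'⟩ := exists_comp_eq_of_ker_le (B.subtype.coprod (zmultiplesHom A x))
    ((χ.comp B.subtype).coprod (zmultiplesHom M θ)) <| by
      rintro ⟨b, c⟩ hbc
      have hcx : c • x = -b := eq_neg_of_add_eq_zero_right hbc
      simp only [mem_ker, coprod_apply, coe_comp, AddSubgroup.coe_subtype, Function.comp_apply,
        zmultiplesHom_apply] at hbc ⊢
      rw [← h c (hcx ▸ neg_mem b.2), ← map_add, hbc, map_zero]
  refine ⟨χ', fun y hy => ?_, ?_⟩
  · simpa using congr($hχ' (⟨y, hy⟩, 0))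
  · simpa using congr($hχ' (0, 1))

end AddMonoidHom

namespace AddCircle

theorem exists_zsmul_eq_norm_le (ζ : 𝕋) {d : ℕ} (hd : 0 < d) :
    ∃ θ : 𝕋, (d : ℤ) • θ = ζ ∧ ‖θ‖ ≤ 1 / (2 * d) := by
  obtain ⟨w, rfl⟩ := QuotientAddGroup.mk_surjective ζ
  have hz : |w - round w| ≤ 1 / 2 := abs_sub_round w
  have hd' : (0 : ℝ) < d := Nat.cast_pos.mpr hd
  refine ⟨((w - round w) / d : ℝ), ?_, ?_⟩
  · rw [← coe_zsmul, zsmul_eq_mul, Int.cast_natCast, mul_div_cancel₀ _ hd'.ne', coe_sub,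
      sub_eq_self, coe_eq_zero_iff]
    exact ⟨round w, by simp⟩
  · calc ‖(((w - round w) / d : ℝ) : 𝕋)‖ ≤ |(w - round w) / d| := QuotientAddGroup.norm_mk_le_norm
      _ ≤ 1 / (2 * d) := by
        rw [abs_div, Nat.abs_cast, div_le_div_iff₀ hd' (by positivity)]
        nlinarith

theorem exists_ne_zero_forall_zsmul_eq_zero {A : Type*} [AddCommGroup A] {g : A} (hg : g ≠ 0) :
    ∃ θ : 𝕋, θ ≠ 0 ∧ ∀ c : ℤ, c • g = 0 → c • θ = 0 := by
  have hr : addOrderOf g ≠ 1 := fun h => hg (AddMonoid.addOrderOf_eq_one_iff.mp h)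
  -- `θ = 1 / addOrderOf g`, or `1 / 2` when `g` has infinite order (`addOrderOf g = 0`)
  set θ : 𝕋 := ↑((1 : ℝ) / (max (addOrderOf g) 2 : ℕ))
  have hθ : addOrderOf θ = max (addOrderOf g) 2 := addOrderOf_period_div (by omega)
  refine ⟨θ, fun h0 => by rw [h0, addOrderOf_zero] at hθ; omega, fun c hc => ?_⟩
  rw [← addOrderOf_dvd_iff_zsmul_eq_zero, hθ]
  have hgc := addOrderOf_dvd_iff_zsmul_eq_zero.mpr hc
  rcases Nat.eq_zero_or_pos (addOrderOf g) with h0 | hpos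
  · rw [h0, Nat.cast_zero, zero_dvd_iff] at hgc
    simp [hgc]
  · rwa [max_eq_left (by omega)]

end AddCircle

theorem exists_compatible_norm_le {A : Type*} [AddCommGroup A] (B : AddSubgroup A) (χ : A →+ 𝕋)
    (x : A) {N D : ℕ} (hN : 0 < N) (hD : 0 < D) (hdvd : ∀ c : ℤ, c • x ∈ B → (N : ℤ) ∣ c * D) :
    ∃ θ : 𝕋, (∀ c : ℤ, c • x ∈ B → χ (c • x) = c • θ) ∧ ‖θ‖ ≤ D / (2 * N) := by
  obtain ⟨d, hd⟩ := Int.subgroup_cyclic (B.comap (zmultiplesHom A x))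
  have hmem : ∀ c : ℤ, c • x ∈ B ↔ d ∣ c := fun c => by
    rw [← zmultiplesHom_apply, ← AddSubgroup.mem_comap, hd, ← AddSubgroup.zmultiples_eq_closure,
      Int.mem_zmultiples_iff]
  rcases eq_or_ne d 0 with rfl | hd0
  · refine ⟨0, fun c hc => ?_, by rw [norm_zero]; positivity⟩
    obtain rfl := zero_dvd_iff.mp ((hmem c).mp hc)
    simp
  have hdx : (d.natAbs : ℤ) • x ∈ B := (hmem _).mpr (Int.dvd_natAbs.mpr dvd_rfl)
  obtain ⟨θ, hθ, hθle⟩ := AddCircle.exists_zsmul_eq_norm_le (χ ((d.natAbs : ℤ) • x))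
    (Int.natAbs_pos.mpr hd0)
  refine ⟨θ, fun c hc => ?_, hθle.trans ?_⟩
  · obtain ⟨q, rfl⟩ := Int.natAbs_dvd.mpr ((hmem c).mp hc)
    rw [mul_comm, mul_smul, mul_smul, map_zsmul, hθ]
  · have hle : N ≤ d.natAbs * D :=
      Nat.le_of_dvd (Nat.mul_pos (Int.natAbs_pos.mpr hd0) hD) (by exact_mod_cast hdvd _ hdx)
    have hle' : (N : ℝ) ≤ d.natAbs * D := by exact_mod_cast hle
    rw [div_le_div_iff₀ (by positivity) (by positivity)]
    nlinarith

section Torsion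

variable {A : Type*} [AddCommGroup A]

theorem zsmul_mem_zmultiples_of_mem_closure_insert {g : A} {S : Set A} {L : ℤ}
    (hS : ∀ s ∈ S, L • s = 0) {y : A} (hy : y ∈ AddSubgroup.closure (insert g S)) :
    L • y ∈ AddSubgroup.zmultiples g := by
  induction hy using AddSubgroup.closure_induction with
  | mem y hy =>
    rcases hy with rfl | hy
    · exact zsmul_mem (AddSubgroup.mem_zmultiples y) L
    · rw [hS y hy]
      exact zero_mem _
  | zero => simp
  | add y z _ _ hy hz => rw [smul_add]; exact add_mem hy hz
  | neg y _ hy => rw [smul_neg]; exact neg_mem hy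

theorem exists_pos_nsmul_eq_zero_of_mem_zmultiples (g : A) :
    ∃ m : ℕ, 0 < m ∧ ∀ y ∈ AddSubgroup.zmultiples g, IsOfFinAddOrder y → m • y = 0 := by
  by_cases hg : IsOfFinAddOrder g
  · exact ⟨addOrderOf g, hg.addOrderOf_pos, fun y hy _ =>
      addOrderOf_dvd_iff_nsmul_eq_zero.mp (addOrderOf_dvd_of_mem_zmultiples hy)⟩
  refine ⟨1, one_pos, fun y hy hfin => ?_⟩
  obtain ⟨k, rfl⟩ := AddSubgroup.mem_zmultiples_iff.mp hy
  have hk0 : ((addOrderOf (k • g) : ℤ) * k) = 0 :=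
    injective_zsmul_iff_not_isOfFinAddOrder.mpr hg <| by
      simp only [mul_smul, zero_smul, natCast_zsmul, addOrderOf_nsmul_eq_zero]
  rw [mul_eq_zero, Nat.cast_eq_zero] at hk0
  rcases hk0 with h | rfl
  · exact absurd h hfin.addOrderOf_pos.ne'
  · rw [zero_smul, smul_zero]

theorem addOrderOf_dvd_of_zsmul_mem_closure_insert {g : A} {m : ℕ}
    (hm : ∀ y ∈ AddSubgroup.zmultiples g, IsOfFinAddOrder y → m • y = 0) {S : Set A} {L : ℤ}
    (hS : ∀ s ∈ S, L • s = 0) {x : A} (hx : IsOfFinAddOrder x) {c : ℤ}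
    (hc : c • x ∈ AddSubgroup.closure (insert g S)) :
    (addOrderOf x : ℤ) ∣ c * (L * m) := by
  rw [addOrderOf_dvd_iff_zsmul_eq_zero, mul_comm, mul_comm L, mul_smul, mul_smul, natCast_zsmul]
  exact hm _ (zsmul_mem_zmultiples_of_mem_closure_insert hS hc) hx.zsmul.zsmul

end Torsion

theorem AddMonoidHom.exists_forall_mem_of_antitone {A M : Type*} [AddZeroClass A]
    [AddZeroClass M] [TopologicalSpace M] [CompactSpace M] [T2Space M] [ContinuousAdd M]
    (K : ℕ → Set (A → M)) (hK : ∀ n, IsClosed (K n)) (hanti : Antitone K)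
    (hne : ∀ n, ∃ χ : A →+ M, ⇑χ ∈ K n) : ∃ χ : A →+ M, ∀ n, ⇑χ ∈ K n := by
  have hclosed n : IsClosed (K n ∩ Set.range ((⇑) : (A →+ M) → A → M)) :=
    (hK n).inter (isClosed_range_coe A M)
  obtain ⟨f, hf⟩ := IsCompact.nonempty_iInter_of_sequence_nonempty_isCompact_isClosed
    (fun n => K n ∩ Set.range (⇑)) (fun n => Set.inter_subset_inter_left _ (hanti n.le_succ))
    (fun n => let ⟨χ, hχ⟩ := hne n; ⟨χ, hχ, χ, rfl⟩) (hclosed 0).isCompact hclosed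
  rw [Set.mem_iInter] at hf
  obtain ⟨χ, rfl⟩ := (hf 0).2
  exact ⟨χ, fun n => (hf n).1⟩

section Sequence

variable {A : Type*} [AddCommGroup A] {a : ℕ → A} {t : ℕ → ℕ}

theorem exists_eq_on_closure_norm_le (ht : ∀ k, t k = addOrderOf (a k)) (hfin : ∀ k, 0 < t k)
    {g : A} {m : ℕ} (hm : 0 < m)
    (hmg : ∀ y ∈ AddSubgroup.zmultiples g, IsOfFinAddOrder y → m • y = 0) {n : ℕ}
    (hn : ∀ k ≤ n, t k ∣ t n) (χ : A →+ 𝕋) :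
    ∃ χ' : A →+ 𝕋, (∀ y ∈ AddSubgroup.closure (insert g (a '' Set.Iic n)), χ' y = χ y) ∧
      ‖χ' (a (n + 1))‖ ≤ m / 2 * (t n / t (n + 1)) := by
  have hS : ∀ s ∈ a '' Set.Iic n, (t n : ℤ) • s = 0 := by
    rintro _ ⟨k, hk, rfl⟩
    rw [← addOrderOf_dvd_iff_zsmul_eq_zero, ← ht, Int.natCast_dvd_natCast]
    exact hn k hk
  have hfin' : IsOfFinAddOrder (a (n + 1)) := by
    rw [← addOrderOf_pos_iff, ← ht]
    exact hfin _
  obtain ⟨θ, hθ, hθle⟩ := exists_compatible_norm_le _ χ (a (n + 1)) (hfin (n + 1))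
    (Nat.mul_pos (hfin n) hm) fun c hc => by
      rw [ht, Nat.cast_mul]
      exact addOrderOf_dvd_of_zsmul_mem_closure_insert hmg hS hfin' hc
  obtain ⟨χ', hχ'B, hχ'x⟩ := AddMonoidHom.exists_eq_on_and_apply_eq _ χ _ θ hθ
  refine ⟨χ', hχ'B, ?_⟩
  rw [hχ'x]
  convert hθle using 1
  push_cast
  ring

theorem exists_addMonoidHom_apply_ne_zero_norm_le (ht : ∀ k, t k = addOrderOf (a k))
    (hfin : ∀ k, 0 < t k) (hdvd : ∀ k, t k ∣ t (k + 1)) {g : A} (hg : g ≠ 0) :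
    ∃ (χ : A →+ 𝕋) (C : ℝ), χ g ≠ 0 ∧ ∀ k, ‖χ (a (k + 1))‖ ≤ C * (t k / t (k + 1)) := by
  obtain ⟨θ₀, hθ₀, hθ₀g⟩ := AddCircle.exists_ne_zero_forall_zsmul_eq_zero hg
  obtain ⟨m, hm, hmg⟩ := exists_pos_nsmul_eq_zero_of_mem_zmultiples g
  let K : ℕ → Set (A → 𝕋) := fun n =>
    {f | f g = θ₀ ∧ ∀ k < n, ‖f (a (k + 1))‖ ≤ m / 2 * (t k / t (k + 1))}
  have hK n : IsClosed (K n) := by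
    simp only [K, Set.ofPred_and, Set.ofPred_forall]
    exact (isClosed_eq (continuous_apply g) continuous_const).inter <| isClosed_iInter fun k =>
      isClosed_iInter fun _ => isClosed_le (continuous_apply _).norm continuous_const
  have hanti : Antitone K := fun n n' hnn' f hf => ⟨hf.1, fun k hk => hf.2 k (hk.trans_le hnn')⟩
  have hne n : ∃ χ : A →+ 𝕋, ⇑χ ∈ K n := by
    induction n with
    | zero =>
      obtain ⟨χ, -, hχg⟩ := AddMonoidHom.exists_eq_on_and_apply_eq ⊥ 0 g θ₀ fun c hc => by
        rw [hθ₀g c (AddSubgroup.mem_bot.mp hc), AddMonoidHom.zero_apply]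
      exact ⟨χ, hχg, fun k hk => absurd hk k.not_lt_zero⟩
    | succ n ih =>
      obtain ⟨χ, hχg, hχ⟩ := ih
      obtain ⟨χ', hχ'B, hχ'x⟩ := exists_eq_on_closure_norm_le ht hfin hm hmg
        (fun k hk => Nat.rel_of_forall_rel_succ_of_le (· ∣ ·) hdvd hk) χ
      refine ⟨χ', by rw [hχ'B g (AddSubgroup.subset_closure (Set.mem_insert _ _)), hχg],
        fun k hk => ?_⟩
      rcases Nat.lt_succ_iff_lt_or_eq.mp hk with hk | rfl
      · rw [hχ'B _ (AddSubgroup.subset_closure (Set.mem_insert_of_mem _ ⟨k + 1, hk, rfl⟩))]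
        exact hχ k hk
      · exact hχ'x
  obtain ⟨χ, hχ⟩ := AddMonoidHom.exists_forall_mem_of_antitone K hK hanti hne
  exact ⟨χ, m / 2, (hχ 0).1 ▸ hθ₀, fun k => (hχ (k + 1)).2 k k.lt_succ_self⟩

theorem tendsto_div_succ_zero (hfin : ∀ k, 0 < t k) (hdvd : ∀ k, t k ∣ t (k + 1))
    (h : Tendsto (fun k => t (k + 1) / t k) atTop atTop) :
    Tendsto (fun k => (t k : ℝ) / t (k + 1)) atTop (𝓝 0) := by
  have heq : (fun k => (t k : ℝ) / t (k + 1)) = fun k => (((t (k + 1) / t k : ℕ) : ℝ))⁻¹ := by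
    ext k
    rw [Nat.cast_div (hdvd k) (Nat.cast_pos.mpr (hfin k)).ne', inv_div]
  rw [heq]
  exact tendsto_inv_atTop_zero.comp (tendsto_natCast_atTop_atTop.comp h)

end Sequence

theorem isTSeq_of_forall_exists_addMonoidHom {A M : Type*} [AddCommGroup A] [AddCommGroup M]
    [TopologicalSpace M] [IsTopologicalAddGroup M] [T2Space M] {a : ℕ → A}
    (h : ∀ g ≠ 0, ∃ χ : A →+ M, χ g ≠ 0 ∧ Tendsto (fun k => χ (a k)) atTop (𝓝 0)) :
    IsTSeq a := by
  let I := {χ : A →+ M // Tendsto (fun k => χ (a k)) atTop (𝓝 0)}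
  let Φ : A →+ (I → M) := AddMonoidHom.pi fun i => i.1
  have hΦ : Function.Injective Φ := (injective_iff_map_eq_zero Φ).mpr fun y hy => by
    by_contra hy0
    obtain ⟨χ, hχ, hχa⟩ := h y hy0
    exact hχ (congr_fun hy ⟨χ, hχa⟩)
  let τ : TopologicalSpace A := TopologicalSpace.induced Φ inferInstance
  refine ⟨τ, topologicalAddGroup_induced Φ, (Topology.IsEmbedding.mk ⟨rfl⟩ hΦ).t2Space, ?_⟩
  rw [nhds_induced, tendsto_comap_iff, map_zero, tendsto_pi_nhds]
  exact fun i => i.2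

/-- If `t_k ∣ t_{k+1}` and `t_{k+1}/t_k → ∞`, then `{a_k}` is a T-sequence. -/
theorem stmt4 {A : Type*} [AddCommGroup A] (a : ℕ → A) (t : ℕ → ℕ)
    (ht : ∀ k, t k = addOrderOf (a k)) (hfin : ∀ k, 0 < t k)
    (hdvd : ∀ k, t k ∣ t (k + 1))
    (h : Filter.Tendsto (fun k => t (k + 1) / t k) Filter.atTop Filter.atTop) :
    IsTSeq a := by
  refine isTSeq_of_forall_exists_addMonoidHom (M := 𝕋) fun g hg => ?_
  obtain ⟨χ, C, hχg, hχ⟩ := exists_addMonoidHom_apply_ne_zero_norm_le ht hfin hdvd hg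
  refine ⟨χ, hχg, (tendsto_add_atTop_iff_nat 1).mp (squeeze_zero_norm hχ ?_)⟩
  simpa using (tendsto_div_succ_zero hfin hdvd h).const_mul C
end
end

section
/- Let A be an almost torsion-free abelian group (i.e., A[n] = {a ∈ A : na = 0} is finite for every n). A sequence {a_k} in A of elements of finite order is a T-sequence if and only if for every l, n ∈ ℕ there exists m₀ such that A[n] ∩ A(l,m)_{a} = {0} for every m ≥ m₀. -/
open Filter Topology

noncomputable section

/-!
Necessity: `A[n] \ {0}` is finite, hence closed, and once the `a_k` stay in a small symmetric
neighbourhood `V` of `0`, the set `A(l,m)` lies in the `l`-fold sumset `l • V`, which misses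
`A[n] \ {0}`.

Sufficiency: every element of `A(l,m)` is torsion, so the hypothesis says that each `g ≠ 0`
eventually leaves `A(l,m)`, and we prove the Zelenyuk–Protasov criterion. The sets `V c` of sums
`∑ f_k a_k` whose coefficients of index `< c r` have total absolute value at most `r` form a basis
at `0` of a group topology in which `a_k → 0`. For `g ≠ 0` choose `c` so fast growing that the top
block `[c j, c (j+1))` of such a representation of `g` can always be discarded: below `c j` sit
`j + 1` intermediate thresholds, one of which falls in a gap of the at most `j` lower indices, and
the hypothesis applied to `g` minus the part below that gap forces `g` to equal that part.
-/

open Pointwise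

namespace TSequence

section Weight

variable {ι : Type*}

def weight (f : ι →₀ ℤ) : ℕ := f.sum fun _ z => z.natAbs

lemma weight_eq_sum_of_support_subset (f : ι →₀ ℤ) {s : Finset ι} (hs : f.support ⊆ s) :
    weight f = ∑ i ∈ s, (f i).natAbs :=
  Finsupp.sum_of_support_subset f hs _ fun _ _ => rfl

lemma natAbs_le_weight (f : ι →₀ ℤ) (i : ι) : (f i).natAbs ≤ weight f := by
  by_cases hi : i ∈ f.support
  · exact Finset.single_le_sum (f := fun i => (f i).natAbs) (fun _ _ => Nat.zero_le _) hi
  · simp [Finsupp.notMem_support_iff.1 hi]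

lemma card_support_le_weight (f : ι →₀ ℤ) : f.support.card ≤ weight f := by
  rw [Finset.card_eq_sum_ones]
  exact Finset.sum_le_sum fun i hi => Int.natAbs_pos.2 (Finsupp.mem_support_iff.1 hi)

@[simp]
lemma weight_zero : weight (0 : ι →₀ ℤ) = 0 := Finsupp.sum_zero_index

@[simp]
lemma weight_single (i : ι) (z : ℤ) : weight (Finsupp.single i z) = z.natAbs :=
  Finsupp.sum_single_index rfl

@[simp]
lemma weight_neg (f : ι →₀ ℤ) : weight (-f) = weight f := by
  simp [weight, Finsupp.sum_neg_index]

lemma weight_add_le (f g : ι →₀ ℤ) : weight (f + g) ≤ weight f + weight g := by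
  classical
  rw [weight_eq_sum_of_support_subset (f + g) Finsupp.support_add,
    weight_eq_sum_of_support_subset f Finset.subset_union_left,
    weight_eq_sum_of_support_subset g Finset.subset_union_right, ← Finset.sum_add_distrib]
  exact Finset.sum_le_sum fun i _ => Int.natAbs_add_le _ _

lemma weight_filter_le_of_imp {p q : ι → Prop} [DecidablePred p] [DecidablePred q]
    (hpq : ∀ i, p i → q i) (f : ι →₀ ℤ) : weight (f.filter p) ≤ weight (f.filter q) := by
  simp only [weight, Finsupp.sum_filter_index, Finsupp.support_filter]
  exact Finset.sum_le_sum_of_subset (Finset.monotone_filter_right _ fun i _ => hpq i)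

lemma weight_filter_le (p : ι → Prop) [DecidablePred p] (f : ι →₀ ℤ) :
    weight (f.filter p) ≤ weight f := by
  simp only [weight, Finsupp.sum_filter_index, Finsupp.support_filter]
  exact Finset.sum_le_sum_of_subset (Finset.filter_subset _ _)

lemma finite_setOf_support_subset_weight_le (s : Finset ι) (j : ℕ) :
    {f : ι →₀ ℤ | f.support ⊆ s ∧ weight f ≤ j}.Finite := by
  refine (s.finsupp fun _ => Finset.Icc (-(j : ℤ)) j).finite_toSet.subset ?_
  rintro f ⟨hs, hj⟩
  refine Finset.mem_finsupp_iff.2 ⟨hs, fun i _ => Finset.mem_Icc.2 ?_⟩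
  have := (natAbs_le_weight f i).trans hj
  omega

end Weight

lemma exists_gap (s : Finset ℕ) {M : ℕ → ℕ} (hM : StrictMono M) :
    ∃ i ≤ s.card, ∀ k ∈ s, k < M i ∨ M (i + 1) ≤ k := by
  by_contra! h
  choose! w hws hw using h
  obtain ⟨i, hi, i', hi', hne, heq⟩ := Finset.exists_ne_map_eq_of_card_lt_of_maps_to
    (s := Finset.range (s.card + 1)) (t := s) (by simp) (f := w)
    fun i hi => hws i (Nat.lt_succ_iff.1 (Finset.mem_range.1 hi))
  have hw' : ∀ i ∈ Finset.range (s.card + 1), M i ≤ w i ∧ w i < M (i + 1) :=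
    fun i hi => hw i (Nat.lt_succ_iff.1 (Finset.mem_range.1 hi))
  obtain ⟨h1, h2⟩ := hw' i hi
  obtain ⟨h1', h2'⟩ := hw' i' hi'
  rcases hne.lt_or_gt with hlt | hlt
  · have : M (i + 1) ≤ M i' := hM.monotone hlt
    omega
  · have : M (i' + 1) ≤ M i := hM.monotone hlt
    omega

/-- These are the coefficient vectors of the sums `x₀ + x₁ + ⋯` with `xᵢ ∈ {0} ∪ {±a_k : k ≥ c i}`,
the basic neighbourhoods of `0` in the Zelenyuk–Protasov topology. -/
def Admissible (c : ℕ → ℕ) (f : ℕ →₀ ℤ) : Prop := ∀ r, weight (f.filter (· < c r)) ≤ r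

namespace Admissible

variable {c c' : ℕ → ℕ} {f g : ℕ →₀ ℤ}

lemma zero : Admissible c 0 := fun r => by simp [Finsupp.filter_zero]

lemma single {k : ℕ} (hk : c 0 ≤ k) : Admissible c (Finsupp.single k 1)
  | 0 => by rw [Finsupp.filter_single_of_neg (· < c 0) (not_lt.2 hk), weight_zero]
  | r + 1 => (weight_filter_le _ _).trans (by simp)

lemma mono (hc : ∀ i, c i ≤ c' i) (hf : Admissible c' f) : Admissible c f := fun r =>
  (weight_filter_le_of_imp (fun _ hk => hk.trans_le (hc r)) f).trans (hf r)

lemma neg (hf : Admissible c f) : Admissible c (-f) := fun r => by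
  rw [Finsupp.filter_neg, weight_neg]
  exact hf r

lemma add (hf : Admissible (fun i => max (c (2 * i)) (c (2 * i + 1))) f)
    (hg : Admissible (fun i => max (c (2 * i)) (c (2 * i + 1))) g) : Admissible c (f + g) :=
  fun r => by
  have hr : c r ≤ max (c (2 * (r / 2))) (c (2 * (r / 2) + 1)) := by
    rcases Nat.even_or_odd' r with ⟨i, rfl | rfl⟩ <;> simp [Nat.mul_add_div]
  have hhalf : ∀ h : ℕ →₀ ℤ, Admissible (fun i => max (c (2 * i)) (c (2 * i + 1))) h →
      weight (h.filter (· < c r)) ≤ r / 2 := fun h hh =>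
    (weight_filter_le_of_imp (fun _ hk => hk.trans_le hr) h).trans (hh (r / 2))
  calc weight ((f + g).filter (· < c r))
      ≤ weight (f.filter (· < c r)) + weight (g.filter (· < c r)) := by
        rw [Finsupp.filter_add]
        exact weight_add_le _ _
    _ ≤ r / 2 + r / 2 := add_le_add (hhalf f hf) (hhalf g hg)
    _ ≤ r := by omega

lemma filter (hf : Admissible c f) (p : ℕ → Prop) [DecidablePred p] :
    Admissible c (f.filter p) := fun r => by
  have hcomm : (f.filter p).filter (· < c r) = (f.filter (· < c r)).filter p := by
    ext k
    simp only [Finsupp.filter_apply]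
    split_ifs <;> rfl
  rw [hcomm]
  exact (weight_filter_le _ _).trans (hf r)

lemma le_of_mem_support (hf : Admissible c f) {k : ℕ} (hk : k ∈ f.support) : c 0 ≤ k := by
  by_contra! hlt
  have h1 := natAbs_le_weight (f.filter (· < c 0)) k
  rw [Finsupp.filter_apply_pos (· < c 0) f hlt] at h1
  have h2 := Int.natAbs_pos.2 (Finsupp.mem_support_iff.1 hk)
  have h3 := hf 0
  omega

lemma weight_le (hf : Admissible c f) {r : ℕ} (hr : ∀ k ∈ f.support, k < c r) :
    weight f ≤ r := by
  have := hf r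
  rwa [(Finsupp.filter_eq_self_iff _ _).2 fun k hk => hr k (Finsupp.mem_support_iff.2 hk)]
    at this

end Admissible

lemma exists_nhds_zero_nsmul_subset {M : Type*} [AddMonoid M] [TopologicalSpace M] [ContinuousAdd M]
    (n : ℕ) {U : Set M} (hU : U ∈ 𝓝 (0 : M)) : ∃ V ∈ 𝓝 (0 : M), n • V ⊆ U := by
  induction n generalizing U with
  | zero => exact ⟨U, hU, by simpa using mem_of_mem_nhds hU⟩
  | succ n ih =>
    obtain ⟨W, hW, hWW⟩ := exists_nhds_zero_half hU
    obtain ⟨V, hV, hVW⟩ := ih hW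
    refine ⟨V ∩ W, inter_mem hV hW, ?_⟩
    rw [succ_nsmul]
    rintro _ ⟨x, hx, y, hy, rfl⟩
    exact hWW x (hVW (Set.nsmul_subset_nsmul_left Set.inter_subset_left hx)) y hy.2

variable {A : Type*} [AddCommGroup A] {a : ℕ → A}

local notation "lc" => Finsupp.linearCombination ℤ

lemma linearCombination_mem_TSet {f : ℕ →₀ ℤ} {l m : ℕ} (hm : ∀ k ∈ f.support, m ≤ k)
    (hl : weight f ≤ l) : lc a f ∈ TSet a l m :=
  ⟨f.support, f, hm, fun _ hk => Finsupp.mem_support_iff.1 hk, hl,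
    Finsupp.linearCombination_apply ℤ f⟩

lemma zero_mem_TSet (a : ℕ → A) (l m : ℕ) : (0 : A) ∈ TSet a l m := by
  simpa using linearCombination_mem_TSet (a := a) (f := 0) (l := l) (m := m) (by simp) (by simp)

lemma TSet_subset_addTorsion (hfin : ∀ k, 0 < addOrderOf (a k)) (l m : ℕ) :
    TSet a l m ⊆ AddCommGroup.torsion A := by
  rintro _ ⟨s, c, -, -, -, rfl⟩
  exact AddSubgroup.sum_mem _ fun k _ =>
    AddSubgroup.zsmul_mem _ (addOrderOf_pos_iff.1 (hfin k)) _

lemma TSet_subset_nsmul {V : Set A} (hV0 : (0 : A) ∈ V) (hVneg : ∀ x ∈ V, -x ∈ V) {l m : ℕ}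
    (ha : ∀ k ≥ m, a k ∈ V) : TSet a l m ⊆ l • V := by
  rintro _ ⟨s, c, hm, -, hl, rfl⟩
  have hzsmul : ∀ (z : ℤ) {x : A}, x ∈ V → z • x ∈ z.natAbs • V := fun z x hx => by
    obtain ⟨n, rfl | rfl⟩ := Int.eq_nat_or_neg z
    · simpa using Set.nsmul_mem_nsmul (n := n) hx
    · simpa using Set.nsmul_mem_nsmul (n := n) (hVneg x hx)
  have hterm : ∀ k ∈ s, c k • a k ∈ (c k).natAbs • V := fun k hk => hzsmul _ (ha k (hm k hk))
  have hsum := Set.finsetSum_mem_finsetSum s _ _ hterm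
  rw [Finset.sum_nsmul_assoc] at hsum
  exact Set.nsmul_subset_nsmul_right hV0 hl hsum

lemma eventually_inter_TSet_subset_zero [TopologicalSpace A] [IsTopologicalAddGroup A] [T1Space A]
    (ha : Tendsto a atTop (𝓝 0)) {F : Set A} (hF : F.Finite) (l : ℕ) :
    ∀ᶠ m in atTop, F ∩ TSet a l m ⊆ {0} := by
  have hU : (F \ {0})ᶜ ∈ 𝓝 (0 : A) :=
    (hF.subset Set.sdiff_subset).isClosed.isOpen_compl.mem_nhds (by simp)
  obtain ⟨V, hV, hVU⟩ := exists_nhds_zero_nsmul_subset l hU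
  have hW : V ∩ -V ∈ 𝓝 (0 : A) := inter_mem hV (neg_mem_nhds_zero A hV)
  filter_upwards [eventually_forall_ge_atTop.2 (ha hW)] with m hm
  rintro x ⟨hxF, hxT⟩
  have hxW := TSet_subset_nsmul (mem_of_mem_nhds hW)
    (fun y hy => ⟨hy.2, by simpa using hy.1⟩) hm hxT
  by_contra hx0
  exact hVU (Set.nsmul_subset_nsmul_left Set.inter_subset_left hxW) ⟨hxF, hx0⟩

lemma eventually_inter_TSet_subset_zero_of_isTSeq (h : IsTSeq a) {F : Set A} (hF : F.Finite)
    (l : ℕ) : ∀ᶠ m in atTop, F ∩ TSet a l m ⊆ {0} := by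
  obtain ⟨τ, hτ, hT2, ha⟩ := h
  exact eventually_inter_TSet_subset_zero ha hF l

def admissibleSums (a : ℕ → A) (c : ℕ → ℕ) : Set A := lc a '' {f | Admissible c f}

abbrev admissibleSumsBasis (a : ℕ → A) : AddGroupFilterBasis A :=
  addGroupFilterBasisOfComm (Set.range (admissibleSums a)) (Set.range_nonempty _)
    (by
      rintro _ _ ⟨c, rfl⟩ ⟨c', rfl⟩
      exact ⟨_, ⟨fun i => max (c i) (c' i), rfl⟩,
        Set.subset_inter (Set.image_mono fun _ hf => hf.mono fun _ => le_max_left _ _)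
          (Set.image_mono fun _ hf => hf.mono fun _ => le_max_right _ _)⟩)
    (by
      rintro _ ⟨c, rfl⟩
      exact ⟨0, Admissible.zero, map_zero _⟩)
    (by
      rintro _ ⟨c, rfl⟩
      refine ⟨_, ⟨fun i => max (c (2 * i)) (c (2 * i + 1)), rfl⟩, ?_⟩
      rintro _ ⟨_, ⟨f, hf, rfl⟩, _, ⟨g, hg, rfl⟩, rfl⟩
      exact ⟨f + g, hf.add hg, map_add _ _ _⟩)
    (by
      rintro _ ⟨c, rfl⟩
      refine ⟨_, ⟨c, rfl⟩, ?_⟩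
      rintro _ ⟨f, hf, rfl⟩
      exact ⟨-f, hf.neg, map_neg _ _⟩)

def IsCutoff (a : ℕ → A) (g : A) (j m : ℕ) : Prop :=
  ∀ fy fz : ℕ →₀ ℤ, weight fy ≤ j → (∀ k ∈ fz.support, m ≤ k) → weight fz ≤ j + 1 →
    g = lc a (fy + fz) →
    ∃ N, g = lc a (fy.filter (· < N))

lemma ne_linearCombination_of_admissible {g : A} (hg : g ≠ 0) {c : ℕ → ℕ} (hc : StrictMono c)
    (hcut : ∀ j, IsCutoff a g j (c j)) (f : ℕ →₀ ℤ) (hf : Admissible c f) : g ≠ lc a f := by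
  induction hn : f.support.card using Nat.strong_induction_on generalizing f with
  | _ n ih =>
  intro hgf
  rcases f.support.eq_empty_or_nonempty with h0 | hne
  · exact hg (by rw [hgf, Finsupp.support_eq_empty.1 h0, map_zero])
  set mx := f.support.max' hne
  have hmx : c 0 ≤ mx := hf.le_of_mem_support (f.support.max'_mem hne)
  obtain ⟨j, hjmx, hmxj⟩ := hc.exists_between_of_tendsto_atTop hc.tendsto_atTop
    (x := mx + 1) (by omega)
  have hw : weight f ≤ j + 1 :=
    hf.weight_le fun k hk => (f.support.le_max' k hk).trans_lt (by omega)
  obtain ⟨N, hN⟩ := hcut j (f.filter (· < c j)) (f.filter (¬ · < c j))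
    (hf j) (fun k hk => not_lt.1 (Finset.mem_filter.1 hk).2)
    ((weight_filter_le _ f).trans hw) (by rw [Finsupp.filter_add_filter_not]; exact hgf)
  refine ih _ ?_ _ ((hf.filter _).filter _) rfl hN
  rw [← hn]
  refine Finset.card_lt_card
    ((Finset.ssubset_iff_of_subset ?_).2 ⟨mx, f.support.max'_mem hne, ?_⟩)
  · exact fun k hk => (Finset.mem_filter.1 (Finset.mem_filter.1 hk).1).1
  · exact fun hk => absurd (Finset.mem_filter.1 (Finset.mem_filter.1 hk).1).2 (by omega)

lemma exists_avoid_low_sums (hμ : ∀ h : A, h ≠ 0 → ∀ l, ∀ᶠ m in atTop, h ∉ TSet a l m)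
    (g : A) (j M : ℕ) :
    ∃ M' > M, ∀ f : ℕ →₀ ℤ, f.support ⊆ Finset.range M → weight f ≤ j →
      g - lc a f ≠ 0 → g - lc a f ∉ TSet a (2 * j + 1) M' := by
  have hfin := (finite_setOf_support_subset_weight_le (Finset.range M) j).image
    fun f => g - lc a f
  obtain ⟨M', hM', hgt⟩ := ((hfin.eventually_all.2 fun h _ =>
    eventually_imp_distrib_left.2 fun hh => hμ h hh (2 * j + 1)).and
    (eventually_gt_atTop M)).exists
  exact ⟨M', hgt, fun f hs hj => hM' _ ⟨f, ⟨hs, hj⟩, rfl⟩⟩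

lemma exists_isCutoff (hμ : ∀ h : A, h ≠ 0 → ∀ l, ∀ᶠ m in atTop, h ∉ TSet a l m)
    (g : A) (j M : ℕ) : ∃ m > M, IsCutoff a g j m := by
  choose nxt hnxt_gt hnxt using exists_avoid_low_sums hμ g j
  set Ms : ℕ → ℕ := fun i => nxt^[i] M
  have hsucc : ∀ i, Ms (i + 1) = nxt (Ms i) := fun i => Function.iterate_succ_apply' _ _ _
  have hmono : StrictMono Ms := strictMono_nat_of_lt_succ fun i => hsucc i ▸ hnxt_gt _
  refine ⟨Ms (j + 1), hmono (Nat.succ_pos j), ?_⟩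
  intro fy fz hwy hfz hwz hg
  -- among the `j + 1` windows `[Ms i, Ms (i+1))` one misses the at most `j` indices of `fy`
  obtain ⟨i, hij, hgap⟩ := exists_gap fy.support hmono
  have hij : i ≤ j := hij.trans ((card_support_le_weight fy).trans hwy)
  by_cases hu : g - lc a (fy.filter (· < Ms i)) = 0
  · exact ⟨Ms i, sub_eq_zero.1 hu⟩
  refine absurd ?_ (hsucc i ▸ hnxt (Ms i) (fy.filter (· < Ms i))
    (fun k hk => Finset.mem_range.2 (Finset.mem_filter.1 hk).2)
    ((weight_filter_le _ _).trans hwy) hu)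
  have hsplit : g - lc a (fy.filter (· < Ms i)) = lc a (fy.filter (¬ · < Ms i) + fz) := by
    have hfy := congrArg (lc a) (Finsupp.filter_add_filter_not fy (· < Ms i))
    rw [map_add] at hfy
    rw [hg, map_add, map_add, ← hfy]
    abel
  rw [hsplit]
  refine linearCombination_mem_TSet (fun k hk => ?_) ((weight_add_le _ _).trans ?_)
  · classical
    rcases Finset.mem_union.1 (Finsupp.support_add hk) with hk | hk
    · obtain ⟨hk, hnlt⟩ := Finset.mem_filter.1 hk
      exact (hgap k hk).resolve_left hnlt
    · exact (hmono.monotone (Nat.succ_le_succ hij)).trans (hfz k hk)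
  · have := weight_filter_le (¬ · < Ms i) fy
    omega

lemma exists_notMem_admissibleSums (hμ : ∀ h : A, h ≠ 0 → ∀ l, ∀ᶠ m in atTop, h ∉ TSet a l m)
    {g : A} (hg : g ≠ 0) : ∃ c, g ∉ admissibleSums a c := by
  choose cut hcut_gt hcut using exists_isCutoff hμ g
  let c : ℕ → ℕ := fun j => Nat.rec (cut 0 0) (fun j prev => cut (j + 1) prev) j
  have hc : StrictMono c := strictMono_nat_of_lt_succ fun j => hcut_gt (j + 1) (c j)
  have hcc : ∀ j, IsCutoff a g j (c j)
    | 0 => hcut 0 0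
    | j + 1 => hcut (j + 1) (c j)
  exact ⟨c, fun ⟨f, hf, hgf⟩ => ne_linearCombination_of_admissible hg hc hcc f hf hgf.symm⟩

/-- The Zelenyuk–Protasov criterion (sufficiency). -/
theorem isTSeq_of_eventually_notMem_TSet
    (hμ : ∀ h : A, h ≠ 0 → ∀ l, ∀ᶠ m in atTop, h ∉ TSet a l m) : IsTSeq a := by
  let B := admissibleSumsBasis a
  let _ : TopologicalSpace A := B.topology
  refine ⟨B.topology, B.isTopologicalAddGroup, ?_, ?_⟩
  · refine (B.t2Space_iff_sInter_subset rfl).2 fun g hg => ?_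
    by_contra hg0
    obtain ⟨c, hc⟩ := exists_notMem_admissibleSums hμ hg0
    exact hc (hg _ ⟨c, rfl⟩)
  · refine B.nhds_zero_hasBasis.tendsto_right_iff.2 ?_
    rintro _ ⟨c, rfl⟩
    exact eventually_atTop.2 ⟨c 0, fun k hk =>
      ⟨Finsupp.single k 1, Admissible.single hk, by simp⟩⟩

lemma eventually_notMem_TSet (hfin : ∀ k, 0 < addOrderOf (a k))
    (h : ∀ l n : ℕ, 0 < n → ∃ m₀ : ℕ, ∀ m ≥ m₀, {x : A | n • x = 0} ∩ TSet a l m = {0})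
    (g : A) (hg : g ≠ 0) (l : ℕ) : ∀ᶠ m in atTop, g ∉ TSet a l m := by
  by_cases htors : g ∈ AddCommGroup.torsion A
  · obtain ⟨n, hn, hng⟩ :=
      isOfFinAddOrder_iff_nsmul_eq_zero.1 ((AddCommGroup.mem_torsion g).1 htors)
    obtain ⟨m₀, hm₀⟩ := h l n hn
    filter_upwards [eventually_ge_atTop m₀] with m hm hgT
    exact hg (hm₀ m hm ▸ ⟨hng, hgT⟩ : g ∈ ({0} : Set A))
  · exact Eventually.of_forall fun m hgT => htors (TSet_subset_addTorsion hfin l m hgT)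

end TSequence

/-- For an almost torsion-free abelian group, a sequence of elements of finite order is a
T-sequence iff for all `l, n` there is `m₀` such that `A[n] ∩ A(l,m) = {0}` for all `m ≥ m₀`. -/
theorem stmt5 {A : Type*} [AddCommGroup A]
    (hA : ∀ n : ℕ, 0 < n → {x : A | n • x = 0}.Finite)
    (a : ℕ → A) (hfin : ∀ k, 0 < addOrderOf (a k)) :
    IsTSeq a ↔ ∀ l n : ℕ, 0 < n → ∃ m₀ : ℕ, ∀ m ≥ m₀,
      {x : A | n • x = 0} ∩ TSet a l m = {0} := by
  refine ⟨fun hT l n hn => ?_, fun h =>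
    TSequence.isTSeq_of_eventually_notMem_TSet (TSequence.eventually_notMem_TSet hfin h)⟩
  obtain ⟨m₀, hm₀⟩ := eventually_atTop.1
    (TSequence.eventually_inter_TSet_subset_zero_of_isTSeq hT (hA n hn) l)
  exact ⟨m₀, fun m hm => (hm₀ m hm).antisymm (by simp [TSequence.zero_mem_TSet])⟩
end
end

section
/- Let {a_k} be a sequence in ℤ(p^∞) with o(a_k) = p^{n_k}. If n_{k+1} − n_k → ∞, then {a_k} is a T-sequence in ℤ(p^∞). -/
open Filter Topology

noncomputable section

/-!
If `φ : ℤ(p^∞) → ℚ/ℤ` is an injective homomorphism with `φ a_k → 0`, the topology induced by `φ`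
makes `{a_k}` a T-sequence. We take `φ` to be multiplication by a `p`-adic unit `ξ = lim u_k`,
chosen block by block. Write `a_k = c_k / p^{n_k}` with `c_k` prime to `p`. Once `u_k` is fixed
modulo `p^{n_k}`, pick `u_{k+1} ≡ u_k (mod p^{n_k})` with `u_{k+1} c_{k+1} mod p^{n_{k+1}}` in
`[0, p^{n_k})`; this is possible because `c_{k+1}` is invertible modulo `p^{n_{k+1}}`. Then
`φ a_{k+1}` is represented by a rational in `[0, p^{n_k - n_{k+1}})`, which tends to `0`.
-/

open Function

theorem IsTSeq.of_injective {A G : Type*} [AddCommGroup A] [AddCommGroup G] [TopologicalSpace G]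
    [IsTopologicalAddGroup G] [T2Space G] (φ : A →+ G) (hφ : Injective φ) {a : ℕ → A}
    (ha : Tendsto (φ ∘ a) atTop (𝓝 0)) : IsTSeq a := by
  let _ : TopologicalSpace A := .induced φ inferInstance
  refine ⟨_, topologicalAddGroup_induced φ, (IsEmbedding.mk ⟨rfl⟩ hφ).t2Space, ?_⟩
  rwa [nhds_induced, tendsto_comap_iff, map_zero]

theorem zsmul_eq_zsmul_of_modEq {G : Type*} [AddGroup G] {x : G} {d : ℕ} (hx : d • x = 0)
    {a b : ℤ} (h : a ≡ b [ZMOD d]) : a • x = b • x :=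
  zsmul_eq_zsmul_iff_modEq.2 <|
    h.of_dvd (Int.natCast_dvd_natCast.2 (addOrderOf_dvd_of_nsmul_eq_zero hx))

theorem Int.modEq_pow_of_succ_modEq {q : ℤ} {N : ℕ → ℕ} (hN : Monotone N) {u : ℕ → ℤ}
    (hu : ∀ j, u (j + 1) ≡ u j [ZMOD q ^ N j]) {i j : ℕ} (hij : i ≤ j) :
    u j ≡ u i [ZMOD q ^ N i] := by
  induction j, hij using Nat.le_induction with
  | base => rfl
  | succ j hij ih => exact ((hu j).of_dvd (pow_dvd_pow q (hN hij))).trans ih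

theorem Int.exists_modEq_mul_emod_lt {M L C : ℤ} (hM : 0 < M) (hL : 0 < L)
    (hLC : IsCoprime L C) (v : ℤ) : ∃ w, w ≡ v [ZMOD M] ∧ w * C % L < M := by
  obtain ⟨b, e, hbe⟩ := hLC
  have hr : 0 ≤ v * C % M := Int.emod_nonneg _ hM.ne'
  refine ⟨v - M * (v * C / M) * e, Int.modEq_iff_dvd.2 ⟨v * C / M * e, by ring⟩, ?_⟩
  -- `e * C ≡ 1 [ZMOD L]`, so `w * C ≡ v * C % M [ZMOD L]`
  have hw : (v - M * (v * C / M) * e) * C = v * C % M + L * (M * (v * C / M) * b) := by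
    rw [Int.emod_def]; linear_combination (-(M * (v * C / M))) * hbe
  rw [hw, Int.add_mul_emod_self_left, Int.emod_def (v * C % M)]
  have : 0 ≤ L * (v * C % M / L) := mul_nonneg hL.le (Int.ediv_nonneg hr hL.le)
  linarith [Int.emod_lt_of_pos (v * C) hM]

theorem Int.exists_seq_modEq_mul_emod_lt {M L C : ℕ → ℤ} (hM : ∀ k, 0 < M k)
    (hL : ∀ k, 0 < L k) (hLC : ∀ k, IsCoprime (L k) (C k)) (u₀ : ℤ) :
    ∃ u : ℕ → ℤ, u 0 = u₀ ∧
      ∀ k, u (k + 1) ≡ u k [ZMOD M k] ∧ u (k + 1) * C k % L k < M k := by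
  choose w hw using fun k => Int.exists_modEq_mul_emod_lt (hM k) (hL k) (hLC k)
  exact ⟨fun k => Nat.rec u₀ (fun k v => w k v) k, rfl, fun k => hw k _⟩

theorem AddCircle.zsmul_coe_intCast_div (w c L : ℤ) :
    w • ((c / L : ℚ) : AddCircle (1 : ℚ)) = ((w * c % L : ℤ) / L : ℚ) := by
  rcases eq_or_ne L 0 with rfl | hL
  · simp
  have hL' : (L : ℚ) ≠ 0 := Int.cast_ne_zero.2 hL
  have h : ((w * c % L : ℤ) / L : ℚ) = w • (c / L : ℚ) - ((w * c / L : ℤ) : ℚ) := by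
    rw [Int.emod_def, zsmul_eq_mul]; push_cast; field_simp
  rw [h, AddCircle.coe_sub, AddCircle.coe_zsmul, eq_comm, sub_eq_self, AddCircle.coe_eq_zero_iff]
  exact ⟨w * c / L, by simp⟩

theorem Prufer.exists_pow_nsmul_eq_zero {p : ℕ} (x : Prufer p) :
    ∃ m : ℕ, p ^ m • (x : AddCircle (1 : ℚ)) = 0 :=
  x.2

section CompatibleSeq

variable {p : ℕ} {g : ℕ → ℤ} (hg : ∀ m, g (m + 1) ≡ g m [ZMOD (p : ℤ) ^ m])
include hg

theorem zsmul_eq_zsmul_of_pow_nsmul_eq_zero {G : Type*} [AddGroup G] {x : G} {m m' : ℕ}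
    (hm : p ^ m • x = 0) (hm' : p ^ m' • x = 0) : g m • x = g m' • x := by
  wlog hle : m ≤ m' generalizing m m'
  · exact (this hm' hm (le_of_not_ge hle)).symm
  refine (zsmul_eq_zsmul_of_modEq hm ?_).symm
  exact_mod_cast Int.modEq_pow_of_succ_modEq monotone_id hg hle

namespace Prufer

/-- Multiplication by the `p`-adic integer `lim g m`: on elements killed by `p ^ m` it is
multiplication by `g m`. -/
def mulSeq : Prufer p →+ AddCircle (1 : ℚ) where
  toFun x := g (exists_pow_nsmul_eq_zero x).choose • (x : AddCircle (1 : ℚ))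
  map_zero' := smul_zero _
  map_add' x y := by
    obtain ⟨m, hm⟩ := exists_pow_nsmul_eq_zero x
    obtain ⟨m', hm'⟩ := exists_pow_nsmul_eq_zero y
    have hx : p ^ (m + m') • (x : AddCircle (1 : ℚ)) = 0 := by
      rw [pow_add, mul_comm, mul_smul, hm, smul_zero]
    have hy : p ^ (m + m') • (y : AddCircle (1 : ℚ)) = 0 := by
      rw [pow_add, mul_smul, hm', smul_zero]
    have hxy : p ^ (m + m') • ((x + y : Prufer p) : AddCircle (1 : ℚ)) = 0 := by
      rw [AddSubgroup.coe_add, smul_add, hx, hy, add_zero]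
    rw [zsmul_eq_zsmul_of_pow_nsmul_eq_zero hg (exists_pow_nsmul_eq_zero (x + y)).choose_spec hxy,
      zsmul_eq_zsmul_of_pow_nsmul_eq_zero hg (exists_pow_nsmul_eq_zero x).choose_spec hx,
      zsmul_eq_zsmul_of_pow_nsmul_eq_zero hg (exists_pow_nsmul_eq_zero y).choose_spec hy,
      AddSubgroup.coe_add, smul_add]

theorem mulSeq_apply {x : Prufer p} {m : ℕ} (hm : p ^ m • (x : AddCircle (1 : ℚ)) = 0) :
    mulSeq hg x = g m • (x : AddCircle (1 : ℚ)) :=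
  zsmul_eq_zsmul_of_pow_nsmul_eq_zero hg (exists_pow_nsmul_eq_zero x).choose_spec hm

theorem mulSeq_injective (hcop : ∀ m, IsCoprime (p : ℤ) (g m)) : Injective (mulSeq hg) := by
  refine (injective_iff_map_eq_zero _).2 fun x hx => ?_
  obtain ⟨m, hm⟩ := exists_pow_nsmul_eq_zero x
  rw [mulSeq_apply hg hm] at hx
  have hunit : IsUnit (addOrderOf (x : AddCircle (1 : ℚ)) : ℤ) :=
    (hcop m).pow_left.isUnit_of_dvd' (by exact_mod_cast addOrderOf_dvd_of_nsmul_eq_zero hm)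
      (addOrderOf_dvd_iff_zsmul_eq_zero.2 hx)
  rw [Int.ofNat_isUnit, Nat.isUnit_iff, AddMonoid.addOrderOf_eq_one_iff] at hunit
  exact_mod_cast hunit

end Prufer

end CompatibleSeq

theorem div_pow_le_inv_pow_sub {𝕜 : Type*} [Field 𝕜] [LinearOrder 𝕜] [IsStrictOrderedRing 𝕜]
    {q r : 𝕜} (hq : 0 < q) {i j : ℕ} (hij : i ≤ j) (hr : r ≤ q ^ i) :
    r / q ^ j ≤ q⁻¹ ^ (j - i) := by
  rw [div_le_iff₀ (by positivity), ← Nat.sub_add_cancel hij, pow_add, ← mul_assoc, inv_pow,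
    Nat.add_sub_cancel, inv_mul_cancel₀ (by positivity), one_mul]
  exact hr

theorem Prufer.exists_injective_tendsto_zero {p : ℕ} (hp : 1 < p) (a : ℕ → Prufer p)
    (n : ℕ → ℕ) (hord : ∀ k, addOrderOf (a k) = p ^ n k) (hn : StrictMono n) (hn0 : 0 < n 0)
    (h : Tendsto (fun k => n (k + 1) - n k) atTop atTop) :
    ∃ φ : Prufer p →+ AddCircle (1 : ℚ), Injective φ ∧ Tendsto (φ ∘ a) atTop (𝓝 0) := by
  have hp0 : 0 < p := by omega
  choose c _ hcop hc using fun k =>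
    (AddCircle.addOrderOf_eq_pos_iff (pow_pos hp0 (n k))).1
      ((AddSubgroup.addOrderOf_coe (a k)).trans (hord k))
  obtain ⟨u, hu0, hu⟩ := Int.exists_seq_modEq_mul_emod_lt
    (M := fun k => (p : ℤ) ^ n k) (L := fun k => (p : ℤ) ^ n (k + 1)) (C := fun k => c (k + 1))
    (fun k => by positivity) (fun k => by positivity)
    (fun k => by exact_mod_cast Nat.isCoprime_iff_coprime.2 (Nat.Coprime.symm (hcop _))) 1
  have hcoh : ∀ {i j}, i ≤ j → u j ≡ u i [ZMOD (p : ℤ) ^ n i] :=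
    Int.modEq_pow_of_succ_modEq hn.monotone fun k => (hu k).1
  have hg : ∀ m, u (m + 1) ≡ u m [ZMOD (p : ℤ) ^ m] :=
    fun m => (hu m).1.of_dvd (pow_dvd_pow _ hn.le_apply)
  have hunit : ∀ m, IsCoprime (p : ℤ) (u m) := fun m => by
    obtain ⟨t, ht⟩ := ((hcoh (Nat.zero_le m)).of_dvd (dvd_pow_self _ hn0.ne')).dvd
    exact ⟨t, 1, by rw [hu0] at ht; linarith⟩
  refine ⟨mulSeq hg, mulSeq_injective hg hunit, ?_⟩
  set ε : ℕ → ℚ := fun k => ((u (k + 1) * c (k + 1) % (p : ℤ) ^ n (k + 1) : ℤ) : ℚ) /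
    (p : ℚ) ^ n (k + 1)
  have hφa : ∀ k, mulSeq hg (a (k + 1)) = ε k := fun k => by
    have hk : p ^ n (k + 1) • (a (k + 1) : AddCircle (1 : ℚ)) = 0 := by
      rw [← hord, ← AddSubgroup.addOrderOf_coe]; exact addOrderOf_nsmul_eq_zero _
    rw [mulSeq_apply hg hk, zsmul_eq_zsmul_of_modEq hk (by exact_mod_cast hcoh hn.le_apply),
      ← hc, mul_one]
    have := AddCircle.zsmul_coe_intCast_div (u (k + 1)) (c (k + 1)) ((p : ℤ) ^ n (k + 1))
    push_cast at this ⊢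
    exact this
  have hε : Tendsto ε atTop (𝓝 0) := by
    refine tendsto_of_tendsto_of_tendsto_of_le_of_le tendsto_const_nhds
      ((tendsto_pow_atTop_nhds_zero_of_lt_one (r := (p : ℚ)⁻¹) (by positivity)
        (inv_lt_one_of_one_lt₀ (by exact_mod_cast hp))).comp h) (fun k => ?_) (fun k => ?_)
    · exact div_nonneg (Int.cast_nonneg_iff.2 (Int.emod_nonneg _ (pow_pos (by omega) _).ne'))
        (by positivity)
    · exact div_pow_le_inv_pow_sub (q := (p : ℚ)) (by positivity) (hn (Nat.lt_succ_self k)).le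
        (by exact_mod_cast (hu k).2.le)
  rw [← tendsto_add_atTop_iff_nat 1]
  simp only [comp_def, hφa]
  exact ((AddCircle.continuous_mk' (1 : ℚ)).tendsto 0).comp hε

/-- If `o(a_k) = p^{n_k}` and `n_{k+1} - n_k → ∞`, then `{a_k}` is a T-sequence in `ℤ(p^∞)`. -/
theorem stmt6 (p : ℕ) (hp : p.Prime) (a : ℕ → Prufer p) (n : ℕ → ℕ)
    (hord : ∀ k, addOrderOf (a k) = p ^ n k)
    (h : Filter.Tendsto (fun k => (n (k + 1) : ℤ) - (n k : ℤ))
      Filter.atTop Filter.atTop) :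
    IsTSeq a := by
  obtain ⟨K, hK⟩ := eventually_atTop.1 (h.eventually_gt_atTop 0)
  have hstep : ∀ k ≥ K, n k < n (k + 1) := fun k hk => by have := hK k hk; omega
  have hmono : StrictMono fun j => n (j + (K + 1)) := strictMono_nat_of_lt_succ fun j => by
    simpa only [Nat.add_right_comm j 1] using hstep (j + (K + 1)) (by omega)
  have hdiff : Tendsto (fun j => n (j + 1 + (K + 1)) - n (j + (K + 1))) atTop atTop := by
    refine tendsto_natCast_atTop_iff.1
      (((tendsto_add_atTop_iff_nat (K + 1)).2 h).congr fun j => ?_)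
    have := hmono (Nat.lt_succ_self j)
    simp only [Nat.add_right_comm j 1] at this ⊢
    omega
  obtain ⟨φ, hφ, hlim⟩ := Prufer.exists_injective_tendsto_zero hp.one_lt
    (fun j => a (j + (K + 1))) (fun j => n (j + (K + 1))) (fun j => hord _) hmono
    (by simpa using Nat.zero_lt_of_lt (hstep K le_rfl)) hdiff
  exact IsTSeq.of_injective φ hφ ((tendsto_add_atTop_iff_nat (K + 1)).1 hlim)
end
end

section
/- Let p be an odd prime. Every element y of ℤ(p^∞) admits a representation y = Σ σ_n e_n (finite sum) with integer coefficients satisfying |σ_n| ≤ (p−1)/2 for all n; moreover, if y = Σ σ_n e_n is any representation with integer coefficients, then there is such a 'canonical' representation y = Σ σ'_n e_n with Σ|σ'_n| ≤ Σ|σ_n|. -/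
/-!
Since `p • e (n + 1) = e n`, a coefficient `σ (n + 1)` can be split as `p t + r` with the balanced
remainder `|r| ≤ (p - 1) / 2`, replaced by `r`, and `t` carried to `σ n` without changing the sum.
For odd `p` this never increases `Σ |σ n|`: if `t ≠ 0` then `|σ (n + 1)| ≥ p |t| - |r|` while
`2 |r| ≤ p - 1`. Carrying from the top index down to `1` and dropping the coefficient of `e 0 = 0`
gives a canonical representation; one exists for every `y`, as `y = m • e n` for some `m`, `n`.
-/

open Filter Topology

noncomputable section

def coeffNorm {ι : Type*} (σ : ι →₀ ℤ) : ℕ :=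
  σ.sum fun _ c => c.natAbs

section CoeffNorm

variable {ι : Type*}

@[simp]
lemma coeffNorm_single (a : ι) (c : ℤ) : coeffNorm (Finsupp.single a c) = c.natAbs :=
  Finsupp.sum_single_index rfl

lemma coeffNorm_add_le (σ τ : ι →₀ ℤ) : coeffNorm (σ + τ) ≤ coeffNorm σ + coeffNorm τ := by
  classical
  have hsupp := Finsupp.support_add (g₁ := σ) (g₂ := τ)
  simp only [coeffNorm]
  rw [Finsupp.sum_of_support_subset _ hsupp _ (fun _ _ => rfl),
    Finsupp.sum_of_support_subset σ Finset.subset_union_left _ (fun _ _ => rfl),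
    Finsupp.sum_of_support_subset τ Finset.subset_union_right _ (fun _ _ => rfl),
    ← Finset.sum_add_distrib]
  exact Finset.sum_le_sum fun i _ => Int.natAbs_add_le (σ i) (τ i)

lemma natAbs_add_coeffNorm_erase (σ : ι →₀ ℤ) (a : ι) :
    (σ a).natAbs + coeffNorm (σ.erase a) = coeffNorm σ :=
  Finsupp.add_sum_erase' σ a (fun _ c => c.natAbs) fun _ => rfl

end CoeffNorm

lemma Int.two_mul_natAbs_bmod_le (x : ℤ) {p : ℕ} (hp : Odd p) :
    2 * (x.bmod p).natAbs ≤ p - 1 := by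
  obtain ⟨k, rfl⟩ := hp
  have h1 := Int.le_bmod (x := x) (m := 2 * k + 1) (by omega)
  have h2 := Int.bmod_lt (x := x) (m := 2 * k + 1) (by omega)
  omega

lemma Int.natAbs_bmod_add_natAbs_bdiv_le (x : ℤ) {p : ℕ} (hp : Odd p) :
    (x.bmod p).natAbs + (x.bdiv p).natAbs ≤ x.natAbs := by
  have hx := Int.bdiv_add_bmod x p
  have hr := Int.two_mul_natAbs_bmod_le x hp
  set r := x.bmod p
  set t := x.bdiv p
  rcases eq_or_ne t 0 with ht | ht
  · simp [ht] at hx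
    simp [ht, hx]
  · have hp1 : 1 ≤ p := hp.pos
    -- `|x| ≥ p|t| - |r|` and `2|r| ≤ p - 1 ≤ (p - 1)|t|`
    have htri : (p : ℤ) * |t| ≤ |x| + |r| := by
      rw [← hx]
      calc (p : ℤ) * |t| = |p * t + r - r| := by simp [abs_mul]
        _ ≤ |p * t + r| + |r| := abs_sub _ _
    have ht1 : 1 ≤ |t| := Int.one_le_abs ht
    zify at hr ⊢
    push_cast [Nat.cast_sub hp1] at hr
    nlinarith

section Carry

variable {G : Type*} [AddCommGroup G] {p : ℕ} {e : ℕ → G}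

open Finsupp

lemma exists_carry_succ (hp : Odd p) (he : ∀ n, (p : ℤ) • e (n + 1) = e n) (σ : ℕ →₀ ℤ) (n : ℕ) :
    ∃ τ : ℕ →₀ ℤ, (∀ k, n + 1 < k → τ k = σ k) ∧ 2 * (τ (n + 1)).natAbs ≤ p - 1 ∧
      linearCombination ℤ e τ = linearCombination ℤ e σ ∧ coeffNorm τ ≤ coeffNorm σ := by
  set x := σ (n + 1)
  refine ⟨σ.erase (n + 1) + single (n + 1) (x.bmod p) + single n (x.bdiv p), ?_, ?_, ?_, ?_⟩
  · intro k hk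
    simp [erase_ne, hk.ne', (Nat.lt_of_succ_lt hk).ne']
  · simpa [single_apply] using Int.two_mul_natAbs_bmod_le x hp
  · conv_rhs => rw [← erase_add_single (n + 1) σ]
    have hx : x • e (n + 1) = x.bmod p • e (n + 1) + x.bdiv p • e n := by
      rw [← he n, smul_smul, ← add_smul, mul_comm (x.bdiv p), add_comm (x.bmod p),
        Int.bdiv_add_bmod]
    simp only [map_add, linearCombination_single, add_assoc, ← hx]
    rfl
  · calc coeffNorm (σ.erase (n + 1) + single (n + 1) (x.bmod p) + single n (x.bdiv p))
        ≤ coeffNorm (σ.erase (n + 1)) + (x.bmod p).natAbs + (x.bdiv p).natAbs := by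
          grw [coeffNorm_add_le, coeffNorm_add_le, coeffNorm_single, coeffNorm_single]
      _ ≤ coeffNorm (σ.erase (n + 1)) + x.natAbs := by
          grw [add_assoc, Int.natAbs_bmod_add_natAbs_bdiv_le x hp]
      _ = coeffNorm σ := by rw [add_comm, natAbs_add_coeffNorm_erase]

lemma exists_balanced_of_balanced_gt (hp : Odd p) (he : ∀ n, (p : ℤ) • e (n + 1) = e n)
    (N : ℕ) (σ : ℕ →₀ ℤ) (hσ : ∀ k, N < k → 2 * (σ k).natAbs ≤ p - 1) :
    ∃ τ : ℕ →₀ ℤ, (∀ k, 0 < k → 2 * (τ k).natAbs ≤ p - 1) ∧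
      linearCombination ℤ e τ = linearCombination ℤ e σ ∧ coeffNorm τ ≤ coeffNorm σ := by
  induction N generalizing σ with
  | zero => exact ⟨σ, hσ, rfl, le_rfl⟩
  | succ N ih =>
    obtain ⟨τ, hτσ, hτN, hval, hnorm⟩ := exists_carry_succ hp he σ N
    have hτ : ∀ k, N < k → 2 * (τ k).natAbs ≤ p - 1 := by
      intro k hk
      rcases (Nat.succ_le_of_lt hk).eq_or_lt with rfl | hk'
      · exact hτN
      · rw [hτσ k hk']
        exact hσ k hk'
    obtain ⟨υ, hυ, hval', hnorm'⟩ := ih τ hτ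
    exact ⟨υ, hυ, hval'.trans hval, hnorm'.trans hnorm⟩

theorem exists_balanced (hp : Odd p) (he : ∀ n, (p : ℤ) • e (n + 1) = e n) (he₀ : e 0 = 0)
    (σ : ℕ →₀ ℤ) :
    ∃ τ : ℕ →₀ ℤ, τ 0 = 0 ∧ (∀ k, 2 * (τ k).natAbs ≤ p - 1) ∧
      linearCombination ℤ e τ = linearCombination ℤ e σ ∧ coeffNorm τ ≤ coeffNorm σ := by
  have hσ : ∀ k, σ.support.sup id < k → 2 * (σ k).natAbs ≤ p - 1 := by
    intro k hk
    rw [notMem_support_iff.mp fun hmem => hk.not_ge (Finset.le_sup (f := id) hmem)]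
    simp
  obtain ⟨τ, hτ, hval, hnorm⟩ := exists_balanced_of_balanced_gt hp he _ σ hσ
  refine ⟨τ.erase 0, erase_same, fun k => ?_, ?_, ?_⟩
  · rcases k.eq_zero_or_pos with rfl | hk
    · simp
    · rw [erase_ne hk.ne']
      exact hτ k hk
  · rw [← hval]
    conv_rhs => rw [← erase_add_single 0 τ]
    rw [map_add, linearCombination_single, he₀, smul_zero, add_zero]
  · rw [← natAbs_add_coeffNorm_erase τ 0] at hnorm
    omega

end Carry

namespace Prufer

lemma coe_eP (p n : ℕ) : (eP p n : AddCircle (1 : ℚ)) = (((p : ℚ) ^ n)⁻¹ : ℚ) := rfl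

lemma eP_zero (p : ℕ) : eP p 0 = 0 := by
  ext
  simp [coe_eP]

lemma natCast_zsmul_eP_succ {p : ℕ} (hp : p ≠ 0) (n : ℕ) : (p : ℤ) • eP p (n + 1) = eP p n := by
  ext
  have hp' : (p : ℚ) ≠ 0 := Nat.cast_ne_zero.mpr hp
  rw [AddSubgroup.coe_zsmul, coe_eP, coe_eP, ← AddCircle.coe_zsmul]
  congr 1
  rw [zsmul_eq_mul, pow_succ]
  push_cast
  field_simp

lemma exists_eq_zsmul_eP {p : ℕ} (hp : p ≠ 0) (y : Prufer p) : ∃ (m : ℤ) (n : ℕ), y = m • eP p n := by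
  obtain ⟨n, hn⟩ := y.2
  obtain ⟨q, hq⟩ := QuotientAddGroup.mk_surjective (y : AddCircle (1 : ℚ))
  rw [← hq, ← AddCircle.coe_nsmul, AddCircle.coe_eq_zero_iff] at hn
  obtain ⟨m, hm⟩ := hn
  refine ⟨m, n, Subtype.ext ?_⟩
  rw [AddSubgroup.coe_zsmul, coe_eP, ← AddCircle.coe_zsmul, ← hq]
  congr 1
  rw [zsmul_eq_mul, mul_one] at hm
  rw [zsmul_eq_mul, hm, nsmul_eq_mul]
  field_simp
  push_cast
  ring

end Prufer

/-- Every element of `ℤ(p^∞)` (`p` odd) has a canonical form, and any representation can be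
turned into a canonical one without increasing the sum of absolute values of coefficients. -/
theorem stmt8 (p : ℕ) (hp : p.Prime) (hodd : p ≠ 2) :
    (∀ y : Prufer p, ∃ σ : ℕ →₀ ℤ, IsCanonical p y σ) ∧
    (∀ (y : Prufer p) (σ : ℕ →₀ ℤ), IsRep p y σ →
      ∃ σ' : ℕ →₀ ℤ, IsCanonical p y σ' ∧
        (∑ n ∈ σ'.support, (σ' n).natAbs) ≤ ∑ n ∈ σ.support, (σ n).natAbs) := by
  have balanced (σ : ℕ →₀ ℤ) : ∃ τ : ℕ →₀ ℤ,
      IsCanonical p (Finsupp.linearCombination ℤ (eP p) σ) τ ∧ coeffNorm τ ≤ coeffNorm σ := by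
    obtain ⟨τ, hτ₀, hτ, hval, hnorm⟩ := exists_balanced (hp.odd_of_ne_two hodd)
      (Prufer.natCast_zsmul_eP_succ hp.ne_zero) (Prufer.eP_zero p) σ
    exact ⟨τ, ⟨⟨hτ₀, hval.symm.trans (Finsupp.linearCombination_apply ℤ τ)⟩, hτ⟩, hnorm⟩
  refine ⟨fun y => ?_, ?_⟩
  · obtain ⟨m, n, rfl⟩ := Prufer.exists_eq_zsmul_eP hp.ne_zero y
    obtain ⟨τ, hτ, -⟩ := balanced (Finsupp.single n m)
    rw [Finsupp.linearCombination_single] at hτ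
    exact ⟨τ, hτ⟩
  · rintro y σ ⟨-, rfl : y = Finsupp.linearCombination ℤ (eP p) σ⟩
    exact balanced σ
end
end

section
/- Let p be an odd prime, m a nonzero integer, and l = ⌈log_p |m|⌉. If n > l, then m·e_n ≠ 0 in ℤ(p^∞) and the support of the canonical form of m·e_n is contained in {n−l, n−l+1, …, n}. -/
open Filter Topology

noncomputable section

/-! Pulled back to the level `e_N`, with `N` at least `n` and every index of `σ`, the
representation `m e_n = Σ σ_k e_k` becomes the congruence `m p^(N-n) ≡ Σ σ_k p^(N-k) [ZMOD p^N]`.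
Reduced mod `p` at the largest index `N`, it forces `p ∣ σ_N`, impossible for a nonzero balanced
digit; so all indices are `≤ n`. Balanced digit sums are small,
`2 |Σ_{a<k≤n} σ_k p^(n-k)| ≤ p^(n-a) - 1`, so at `N = n` the congruence is an equality, and its
leading term gives `2|m| ≥ p^(n-K) + 1` for the least index `K`; with `|m| ≤ p^l` this is `K ≥ n-l`.
-/

theorem Int.eq_zero_of_dvd_of_two_mul_natAbs_le {p : ℕ} {a : ℤ} (hdvd : (p : ℤ) ∣ a)
    (ha : 2 * a.natAbs ≤ p - 1) : a = 0 := by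
  obtain h | h : a.natAbs = 0 ∨ a.natAbs < p := by omega
  · exact Int.natAbs_eq_zero.mp h
  · exact Int.eq_zero_of_dvd_of_natAbs_lt_natAbs hdvd (by simpa using h)

theorem sum_Ioc_sub_one_mul_pow (p : ℤ) (a n : ℕ) :
    ∑ k ∈ Finset.Ioc a n, (p - 1) * p ^ (n - k) = p ^ (n - a) - 1 := by
  have hreflect : ∑ k ∈ Finset.Ioc a n, p ^ (n - k) = ∑ j ∈ Finset.range (n - a), p ^ j := by
    refine Finset.sum_nbij' (fun k => n - k) (fun j => n - j) ?_ ?_ ?_ ?_ fun _ _ => rfl <;>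
      intro k hk <;> simp only [Finset.mem_Ioc, Finset.mem_range] at hk ⊢ <;> omega
  rw [← Finset.mul_sum, hreflect, mul_comm, geom_sum_mul]

section BalancedDigits

variable {p : ℕ} {d : ℕ → ℤ} {t : Finset ℕ} {a n : ℕ}

theorem two_mul_abs_sum_mul_pow_le (hp : 0 < p) (hd : ∀ k ∈ t, 2 * |d k| ≤ (p : ℤ) - 1)
    (ht : t ⊆ Finset.Ioc a n) :
    2 * |∑ k ∈ t, d k * (p : ℤ) ^ (n - k)| ≤ (p : ℤ) ^ (n - a) - 1 := by
  have hp1 : (0 : ℤ) ≤ p - 1 := sub_nonneg.mpr (Nat.one_le_cast.mpr hp)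
  calc 2 * |∑ k ∈ t, d k * (p : ℤ) ^ (n - k)|
      ≤ 2 * ∑ k ∈ t, |d k * (p : ℤ) ^ (n - k)| := by gcongr; exact Finset.abs_sum_le_sum_abs _ _
    _ = ∑ k ∈ t, 2 * |d k| * (p : ℤ) ^ (n - k) := by simp [Finset.mul_sum, abs_mul, mul_assoc]
    _ ≤ ∑ k ∈ t, ((p : ℤ) - 1) * (p : ℤ) ^ (n - k) :=
        Finset.sum_le_sum fun k hk => by gcongr; exact hd k hk
    _ ≤ ∑ k ∈ Finset.Ioc a n, ((p : ℤ) - 1) * (p : ℤ) ^ (n - k) :=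
        Finset.sum_le_sum_of_subset_of_nonneg ht fun _ _ _ => mul_nonneg hp1 (by positivity)
    _ = (p : ℤ) ^ (n - a) - 1 := sum_Ioc_sub_one_mul_pow _ _ _

theorem pow_add_one_le_two_mul_abs_sum_mul_pow (hp : 0 < p)
    (hd : ∀ k ∈ t, 2 * |d k| ≤ (p : ℤ) - 1) {K : ℕ} (hK : K ∈ t) (hdK : d K ≠ 0)
    (ht : ∀ k ∈ t, K ≤ k ∧ k ≤ n) :
    (p : ℤ) ^ (n - K) + 1 ≤ 2 * |∑ k ∈ t, d k * (p : ℤ) ^ (n - k)| := by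
  have htail := two_mul_abs_sum_mul_pow_le (t := t.erase K) (a := K) (n := n) hp
    (fun k hk => hd k (Finset.mem_of_mem_erase hk)) fun k hk => by
      have := ht k (Finset.mem_of_mem_erase hk)
      have := Finset.ne_of_mem_erase hk
      simp only [Finset.mem_Ioc]; omega
  have hlead : (p : ℤ) ^ (n - K) ≤ |d K * (p : ℤ) ^ (n - K)| := by
    rw [abs_mul, abs_of_nonneg (pow_nonneg (Int.natCast_nonneg p) _)]
    exact le_mul_of_one_le_left (by positivity) (Int.one_le_abs hdK)
  rw [← Finset.add_sum_erase t _ hK]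
  linarith [abs_sub_abs_le_abs_add (d K * (p : ℤ) ^ (n - K))
    (∑ k ∈ t.erase K, d k * (p : ℤ) ^ (n - k))]

end BalancedDigits

section Prufer

variable {p : ℕ}

theorem coe_eP (p n : ℕ) : (eP p n : AddCircle (1 : ℚ)) = (((p : ℚ) ^ n)⁻¹ : ℚ) := rfl

theorem eP_eq_pow_smul_eP (hp : p ≠ 0) {k N : ℕ} (hk : k ≤ N) :
    eP p k = p ^ (N - k) • eP p N := by
  ext
  rw [AddSubgroup.coe_nsmul, coe_eP, coe_eP, ← AddCircle.coe_nsmul, nsmul_eq_mul]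
  congr 1
  have : (p : ℚ) ≠ 0 := by exact_mod_cast hp
  rw [← Nat.sub_add_cancel hk, pow_add]
  simp only [Nat.add_sub_cancel]
  field_simp
  push_cast
  ring

theorem zsmul_eP_eq_zero_iff (hp : p ≠ 0) (a : ℤ) (N : ℕ) :
    a • eP p N = 0 ↔ (p : ℤ) ^ N ∣ a := by
  rw [← ZeroMemClass.coe_eq_zero, AddSubgroup.coe_zsmul, coe_eP, ← AddCircle.coe_zsmul,
    AddCircle.coe_eq_zero_iff]
  have : ((p : ℚ) ^ N) ≠ 0 := by positivity
  simp only [zsmul_eq_mul, mul_one]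
  constructor
  · rintro ⟨z, hz⟩
    refine ⟨z, ?_⟩
    field_simp at hz
    rw [mul_comm]
    exact_mod_cast hz.symm
  · rintro ⟨z, rfl⟩
    exact ⟨z, by push_cast; field_simp⟩

theorem zsmul_eP_eq_mul_pow_zsmul_eP (hp : p ≠ 0) (c : ℤ) {k N : ℕ} (hk : k ≤ N) :
    c • eP p k = (c * (p : ℤ) ^ (N - k)) • eP p N := by
  rw [eP_eq_pow_smul_eP hp hk, mul_zsmul, ← Nat.cast_pow, natCast_zsmul]

theorem pow_dvd_sub_sum_of_zsmul_eP_eq_sum (hp : p ≠ 0) {m : ℤ} {n N : ℕ} {s : Finset ℕ}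
    {c : ℕ → ℤ} (h : m • eP p n = ∑ k ∈ s, c k • eP p k) (hn : n ≤ N)
    (hs : ∀ k ∈ s, k ≤ N) :
    (p : ℤ) ^ N ∣ m * (p : ℤ) ^ (N - n) - ∑ k ∈ s, c k * (p : ℤ) ^ (N - k) := by
  rw [← zsmul_eP_eq_zero_iff hp, sub_smul, Finset.sum_smul, sub_eq_zero,
    ← zsmul_eP_eq_mul_pow_zsmul_eP hp m hn, h]
  exact Finset.sum_congr rfl fun k hk => zsmul_eP_eq_mul_pow_zsmul_eP hp (c k) (hs k hk)

end Prufer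

namespace IsCanonical

variable {p : ℕ} {y : Prufer p} {σ : ℕ →₀ ℤ} {m : ℤ} {n : ℕ}

theorem two_mul_abs_le (hp : 0 < p) (h : IsCanonical p y σ) (k : ℕ) :
    2 * |σ k| ≤ (p : ℤ) - 1 := by
  have := h.2 k
  rw [Int.abs_eq_natAbs]
  omega

theorem support_le (hp : p ≠ 0) (h : IsCanonical p (m • eP p n) σ) :
    ∀ k ∈ σ.support, k ≤ n := by
  by_contra! ⟨k₀, hk₀, hnk₀⟩
  set N := σ.support.max' ⟨k₀, hk₀⟩
  have hN : N ∈ σ.support := σ.support.max'_mem _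
  have hnN : n < N := hnk₀.trans_le (σ.support.le_max' k₀ hk₀)
  have hdvd := pow_dvd_sub_sum_of_zsmul_eP_eq_sum hp h.1.2 hnN.le
    fun k hk => σ.support.le_max' k hk
  rw [← Finset.add_sum_erase _ _ hN, Nat.sub_self, pow_zero, mul_one] at hdvd
  have hlow : (p : ℤ) ∣ ∑ k ∈ σ.support.erase N, σ k * (p : ℤ) ^ (N - k) :=
    Finset.dvd_sum fun k hk => by
      have hkN : k < N := lt_of_le_of_ne (σ.support.le_max' k (Finset.mem_of_mem_erase hk))
        (Finset.ne_of_mem_erase hk)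
      exact dvd_mul_of_dvd_right (dvd_pow_self _ (by omega)) _
  have hhigh : (p : ℤ) ∣ m * (p : ℤ) ^ (N - n) := dvd_mul_of_dvd_right (dvd_pow_self _ (by omega)) _
  have hσN : (p : ℤ) ∣ σ N :=
    (dvd_add_left hlow).mp <| (dvd_sub_right hhigh).mp <| (dvd_pow_self _ (by omega)).trans hdvd
  exact Finsupp.mem_support_iff.mp hN (Int.eq_zero_of_dvd_of_two_mul_natAbs_le hσN (h.2 N))

theorem eq_sum_mul_pow (hp : 0 < p) (h : IsCanonical p (m • eP p n) σ)
    (hm : 2 * |m| ≤ (p : ℤ) ^ n) :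
    m = ∑ k ∈ σ.support, σ k * (p : ℤ) ^ (n - k) := by
  have hle := h.support_le hp.ne'
  have hdvd := pow_dvd_sub_sum_of_zsmul_eP_eq_sum hp.ne' h.1.2 le_rfl hle
  rw [Nat.sub_self, pow_zero, mul_one] at hdvd
  have hsum := two_mul_abs_sum_mul_pow_le (a := 0) hp (fun k _ => h.two_mul_abs_le hp k)
    fun k hk => Finset.mem_Ioc.mpr
      ⟨Nat.pos_of_ne_zero fun hk0 => Finsupp.mem_support_iff.mp hk (hk0 ▸ h.1.1), hle k hk⟩
  rw [Nat.sub_zero] at hsum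
  refine sub_eq_zero.mp (Int.eq_zero_of_abs_lt_dvd hdvd ?_)
  linarith [abs_sub m (∑ k ∈ σ.support, σ k * (p : ℤ) ^ (n - k))]

end IsCanonical

theorem stmt11_general (p : ℕ) (hp : p.Prime) (m : ℤ) (hm : m ≠ 0)
    (l n : ℕ) (hl : l = Nat.clog p m.natAbs) (hn : l < n)
    (σ : ℕ →₀ ℤ) (hσ : IsCanonical p (m • eP p n) σ) :
    m • eP p n ≠ 0 ∧ σ.support ⊆ Finset.Icc (n - l) n := by
  have hml : |m| ≤ (p : ℤ) ^ l := by
    rw [Int.abs_eq_natAbs]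
    exact_mod_cast hl ▸ Nat.le_pow_clog hp.one_lt _
  have hpl : 2 * (p : ℤ) ^ l ≤ (p : ℤ) ^ (l + 1) := by
    rw [pow_succ, mul_comm]
    gcongr
    exact_mod_cast hp.two_le
  have hpow : ∀ j, l < j → (p : ℤ) ^ (l + 1) ≤ (p : ℤ) ^ j := fun j hj =>
    pow_le_pow_right₀ (by exact_mod_cast hp.one_lt.le) hj
  have hpl_pos : (0 : ℤ) < (p : ℤ) ^ l := pow_pos (by exact_mod_cast hp.pos) l
  refine ⟨?_, fun k hk => Finset.mem_Icc.mpr ⟨?_, hσ.support_le hp.ne_zero k hk⟩⟩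
  · rw [Ne, zsmul_eP_eq_zero_iff hp.ne_zero]
    exact fun hdvd => hm (Int.eq_zero_of_abs_lt_dvd hdvd (by linarith [hpow n hn]))
  · by_contra! hk'
    obtain ⟨K, hK, hKmin⟩ := σ.support.exists_min_image id ⟨k, hk⟩
    have hlow := pow_add_one_le_two_mul_abs_sum_mul_pow hp.pos
      (fun k _ => hσ.two_mul_abs_le hp.pos k) hK (Finsupp.mem_support_iff.mp hK)
      fun j hj => ⟨hKmin j hj, hσ.support_le hp.ne_zero j hj⟩
    rw [← hσ.eq_sum_mul_pow hp.pos (by linarith [hpow n hn])] at hlow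
    linarith [hpow (n - K) (by have : K ≤ k := hKmin k hk; omega)]

/-- For a nonzero integer `m` with `l = ⌈log_p |m|⌉ < n`, `m • e_n ≠ 0` and the canonical
support of `m • e_n` is contained in `{n-l, …, n}`. -/
theorem stmt11 (p : ℕ) (hp : p.Prime) (hodd : p ≠ 2) (m : ℤ) (hm : m ≠ 0)
    (l n : ℕ) (hl : l = Nat.clog p m.natAbs) (hn : l < n)
    (σ : ℕ →₀ ℤ) (hσ : IsCanonical p (m • eP p n) σ) :
    m • eP p n ≠ 0 ∧ σ.support ⊆ Finset.Icc (n - l) n :=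
  stmt11_general p hp m hm l n hl hn σ hσ
end
end

section
/- Let p be an odd prime and y, z ∈ ℤ(p^∞) with λ(y) > λ(z). If Λ(y) = {k₁ < k₂ < ⋯ < k_g} where g = λ(y), then the order of y + z is at least p^{k_{g−λ(z)}}. -/
open Filter Topology

noncomputable section

/-!
Put `δ = σ + τ`, so that `y + z = Σ δₙ eₙ` with `|δₙ| ≤ p - 1`. Among the `λ(z) + 1` indices
`k_{g-λ(z)} < ⋯ < k_g` of `Λ(y)` one, say `n`, lies outside `Λ(z)`, so `δₙ = σₙ ≠ 0`.
Digits of absolute value `< p` cannot cancel: if `p ^ j` kills `Σ_{m ≤ N} δₘ eₘ = A e_N` with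
`A = Σ δ_{N-i} p^i`, then `p^{N-j} ∣ A`, and peeling off the lowest digit (divisible by `p` but
smaller than `p` in absolute value, hence zero) shows `δₘ = 0` for every `m > j`. Hence the order
`p ^ j` of `y + z` has `j ≥ n ≥ k_{g-λ(z)}`.
-/

theorem Int.eq_zero_of_pow_dvd_sum_mul_pow {p : ℤ} {d : ℕ → ℤ} (hd : ∀ i, |d i| < p) :
    ∀ {L r : ℕ}, p ^ r ∣ ∑ i ∈ Finset.range L, d i * p ^ i → ∀ i < r, i < L → d i = 0 := by
  intro L
  induction L generalizing d with
  | zero => simp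
  | succ L ih =>
    rintro (_ | r) hdvd i hir hiL
    · omega
    have hp : p ≠ 0 := ((abs_nonneg _).trans_lt (hd 0)).ne'
    rw [Finset.sum_range_succ', pow_zero, mul_one] at hdvd
    have hsplit : ∑ i ∈ Finset.range L, d (i + 1) * p ^ (i + 1)
        = p * ∑ i ∈ Finset.range L, d (i + 1) * p ^ i := by
      rw [Finset.mul_sum]; exact Finset.sum_congr rfl fun i _ => by ring
    rw [hsplit] at hdvd
    have hd0 : d 0 = 0 := Int.eq_zero_of_abs_lt_dvd
      ((dvd_add_right (dvd_mul_right p _)).1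
        ((dvd_pow_self p (Nat.succ_ne_zero r)).trans hdvd)) (hd 0)
    rw [hd0, add_zero, pow_succ', mul_dvd_mul_iff_left hp] at hdvd
    rcases i with _ | i
    · exact hd0
    · exact ih (fun i => hd (i + 1)) hdvd i (by omega) (by omega)

namespace Prufer

variable {p : ℕ}

theorem addOrderOf_eP (hp : p ≠ 0) (n : ℕ) : addOrderOf (eP p n) = p ^ n := by
  rw [← AddSubgroup.addOrderOf_coe]
  have hpn : 0 < p ^ n := by positivity
  simpa [eP] using AddCircle.addOrderOf_period_div (p := (1 : ℚ)) hpn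

theorem pow_nsmul_eP (hp : p ≠ 0) (n k : ℕ) : p ^ k • eP p (n + k) = eP p n := by
  apply Subtype.ext
  simp only [AddSubgroup.coe_nsmul, eP]
  rw [← AddCircle.coe_nsmul, nsmul_eq_mul]
  congr 1
  have : (p : ℚ) ≠ 0 := by exact_mod_cast hp
  push_cast
  field_simp
  ring

theorem exists_addOrderOf_eq_pow (hp : p.Prime) (x : Prufer p) : ∃ j, addOrderOf x = p ^ j := by
  obtain ⟨m, hm⟩ := x.2
  obtain ⟨j, -, hj⟩ := (Nat.dvd_prime_pow hp).1 <| addOrderOf_dvd_of_nsmul_eq_zero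
    (Subtype.ext hm : p ^ m • x = 0)
  exact ⟨j, hj⟩

theorem sum_range_zsmul_eP (hp : p ≠ 0) (c : ℕ → ℤ) (N : ℕ) :
    ∑ n ∈ Finset.range (N + 1), c n • eP p n
      = (∑ n ∈ Finset.range (N + 1), c n * (p : ℤ) ^ (N - n)) • eP p N := by
  rw [Finset.sum_smul]
  refine Finset.sum_congr rfl fun n hn => ?_
  have hnN : n + (N - n) = N := by have := Finset.mem_range.1 hn; omega
  conv_lhs => rw [← pow_nsmul_eP hp n (N - n), hnN]
  rw [mul_zsmul, ← natCast_zsmul]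
  push_cast
  rfl

theorem le_of_pow_nsmul_sum_eq_zero {δ : ℕ →₀ ℤ} (hδ : ∀ n, |δ n| < p) {j : ℕ}
    (h : p ^ j • δ.sum (fun n c => c • eP p n) = 0) {n : ℕ} (hn : δ n ≠ 0) : n ≤ j := by
  have hp : p ≠ 0 := by
    have := (abs_nonneg _).trans_lt (hδ 0)
    omega
  by_contra! hjn
  set N := δ.support.sup id
  have hnN : n ≤ N := Finset.le_sup (f := id) (Finsupp.mem_support_iff.2 hn)
  have hsupp : δ.support ⊆ Finset.range (N + 1) := fun m hm =>
    Finset.mem_range_succ_iff.2 (Finset.le_sup (f := id) hm)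
  rw [Finsupp.sum_of_support_subset δ hsupp (fun n c => c • eP p n) (fun _ _ => zero_zsmul _),
    sum_range_zsmul_eP hp, ← natCast_zsmul, smul_smul, ← addOrderOf_dvd_iff_zsmul_eq_zero,
    addOrderOf_eP hp] at h
  push_cast at h
  have hreflect : ∑ i ∈ Finset.range (N + 1), δ (N - i) * (p : ℤ) ^ i
      = ∑ m ∈ Finset.range (N + 1), δ m * (p : ℤ) ^ (N - m) := by
    rw [← Finset.sum_range_reflect]
    refine Finset.sum_congr rfl fun i hi => ?_
    rw [Finset.mem_range] at hi
    rw [Nat.add_sub_cancel, Nat.sub_sub_self (by omega)]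
  have hdvd : (p : ℤ) ^ (N - j) ∣ ∑ i ∈ Finset.range (N + 1), δ (N - i) * (p : ℤ) ^ i := by
    rwa [hreflect, ← mul_dvd_mul_iff_left (pow_ne_zero j (Int.natCast_ne_zero.2 hp)), ← pow_add,
      Nat.add_sub_cancel' (hjn.le.trans hnN)]
  have hδn := Int.eq_zero_of_pow_dvd_sum_mul_pow (fun i => hδ (N - i)) hdvd (N - n)
    (by omega) (by omega)
  rw [Nat.sub_sub_self hnN] at hδn
  exact hn hδn

theorem IsCanonical.abs_add_apply_lt (hp : 0 < p) {y z : Prufer p} {σ τ : ℕ →₀ ℤ}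
    (hσ : IsCanonical p y σ) (hτ : IsCanonical p z τ) (n : ℕ) : |σ n + τ n| < p := by
  have h1 := hσ.2 n
  have h2 := hτ.2 n
  have := Int.natAbs_add_le (σ n) (τ n)
  rw [Int.abs_eq_natAbs]
  omega

theorem IsRep.add {y z : Prufer p} {σ τ : ℕ →₀ ℤ} (hσ : IsRep p y σ) (hτ : IsRep p z τ) :
    y + z = (σ + τ).sum (fun n c => c • eP p n) := by
  rw [hσ.2, hτ.2, Finsupp.sum_add_index' (fun _ => zero_zsmul _) fun _ _ _ => add_zsmul _ _ _]
  rfl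

end Prufer

theorem Finset.exists_mem_notMem_orderIsoOfFin_le {α : Type*} [LinearOrder α] {s t : Finset α}
    (i : Fin s.card) (h : t.card < s.card - i) :
    ∃ x ∈ s, x ∉ t ∧ (s.orderIsoOfFin rfl i : α) ≤ x := by
  set e := s.orderEmbOfFin rfl
  have hcard : ((Finset.Ici i).map e.toEmbedding).card = s.card - i := by simp
  obtain ⟨x, hx, hxt⟩ := Finset.exists_mem_notMem_of_card_lt_card (hcard ▸ h)
  obtain ⟨k, hik, rfl⟩ := Finset.mem_map.1 hx
  exact ⟨e k, s.orderEmbOfFin_mem rfl k, hxt, e.monotone (Finset.mem_Ici.1 hik)⟩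

open Prufer in
/-- If `λ(y) > λ(z)` and `Λ(y) = {k₁ < ⋯ < k_g}` with `g = λ(y)`, then
`o(y + z) ≥ p^{k_{g - λ(z)}}`. -/
theorem stmt12 (p : ℕ) (hp : p.Prime) (y z : Prufer p)
    (σ τ : ℕ →₀ ℤ) (hσ : IsCanonical p y σ) (hτ : IsCanonical p z τ)
    (hlt : τ.support.card < σ.support.card) :
    p ^ ((σ.support.orderIsoOfFin rfl
        ⟨σ.support.card - τ.support.card - 1, by omega⟩ : ℕ)) ≤ addOrderOf (y + z) := by
  obtain ⟨n, hnσ, hnτ, hKn⟩ := Finset.exists_mem_notMem_orderIsoOfFin_le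
    (s := σ.support) (t := τ.support) ⟨σ.support.card - τ.support.card - 1, by omega⟩
    (by simp only; omega)
  obtain ⟨j, hj⟩ := exists_addOrderOf_eq_pow hp (y + z)
  have hkill : p ^ j • (σ + τ).sum (fun n c => c • eP p n) = 0 := by
    rw [← hσ.1.add hτ.1, ← hj, addOrderOf_nsmul_eq_zero]
  have hδn : (σ + τ) n ≠ 0 := by
    rwa [Finsupp.add_apply, Finsupp.notMem_support_iff.1 hnτ, add_zero, ← Finsupp.mem_support_iff]
  rw [hj]
  exact Nat.pow_le_pow_right hp.pos <| hKn.trans <|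
    le_of_pow_nsmul_sum_eq_zero (hσ.abs_add_apply_lt hp.pos hτ) hkill hδn
end
end
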